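/- arXiv:2110.07005 — 5 statements merged into one kernel-verified Lean document; each statement's English description precedes it below -/
import Mathlib

section
/- A finite simple graph G admits an orientation in which every vertex has outdegree at most k if and only if every subgraph H of G satisfies |E(H)| ≤ k·|V(H)| (equivalently MAD(G) ≤ 2k). -/
open SimpleGraph Finset

/-- An orientation of a simple graph `G`: each edge gets exactly one direction. -/
structure GOrientation {V : Type*} (G : SimpleGraph V) where
  dir : V → V → Bool
  adj_iff : ∀ u v, G.Adj u v ↔ (dir u v = true ∨ dir v u = true)
  not_both : ∀ u v, ¬(dir u v = true ∧ dir v u = true)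

def GOrientation.outDeg {V : Type*} [Fintype V] {G : SimpleGraph V}
    (o : GOrientation G) (u : V) : ℕ :=
  (Finset.univ.filter fun v => o.dir u v = true).card

def GOrientation.inDeg {V : Type*} [Fintype V] {G : SimpleGraph V}
    (o : GOrientation G) (u : V) : ℕ :=
  (Finset.univ.filter fun v => o.dir v u = true).card

/-- A proper orientation: adjacent vertices get distinct outdegrees. -/
def GOrientation.IsProper {V : Type*} [Fintype V] {G : SimpleGraph V}
    (o : GOrientation G) : Prop :=
  ∀ u v, G.Adj u v → o.outDeg u ≠ o.outDeg v

/-- Maximum average degree: sup over nonempty subgraphs of 2|E(H)|/|V(H)|. -/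
noncomputable def mad {V : Type*} [Fintype V] (G : SimpleGraph V) : ℝ :=
  sSup {x : ℝ | ∃ H : G.Subgraph, H.verts.Nonempty ∧
    x = 2 * H.edgeSet.ncard / H.verts.ncard}

/-- `H` is a minor of `G`: disjoint nonempty connected branch sets with edges realized. -/
def HasMinor {V W : Type*} (G : SimpleGraph V) (H : SimpleGraph W) : Prop :=
  ∃ B : W → Set V,
    (∀ w, (B w).Nonempty) ∧
    (∀ w, (G.induce (B w)).Connected) ∧
    (∀ w₁ w₂, w₁ ≠ w₂ → Disjoint (B w₁) (B w₂)) ∧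
    (∀ w₁ w₂, H.Adj w₁ w₂ → ∃ u ∈ B w₁, ∃ v ∈ B w₂, G.Adj u v)

/-- Planarity via Wagner's theorem: no `K₅` and no `K_{3,3}` minor. -/
def IsPlanar {V : Type*} (G : SimpleGraph V) : Prop :=
  ¬ HasMinor G (completeGraph (Fin 5)) ∧
  ¬ HasMinor G (completeBipartiteGraph (Fin 3) (Fin 3))

/-- Outerplanarity: no `K₄` and no `K_{2,3}` minor. -/
def IsOuterplanar {V : Type*} (G : SimpleGraph V) : Prop :=
  ¬ HasMinor G (completeGraph (Fin 4)) ∧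
  ¬ HasMinor G (completeBipartiteGraph (Fin 2) (Fin 3))

theorem hakimi_fwd {V : Type*} [Fintype V] (G : SimpleGraph V) (k : ℕ)
    (o : GOrientation G) (ho : ∀ u, o.outDeg u ≤ k) (H : G.Subgraph) :
    H.edgeSet.ncard ≤ k * H.verts.ncard := by
  classical
  set φ : Sym2 V → V × V := fun e =>
    if o.dir e.out.1 e.out.2 = true then (e.out.1, e.out.2) else (e.out.2, e.out.1) with hφ
  have hout : ∀ e : Sym2 V, s(e.out.1, e.out.2) = e := fun e => e.out_eq
  have hmk : ∀ e : Sym2 V, s((φ e).1, (φ e).2) = e := by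
    intro e
    by_cases h : o.dir e.out.1 e.out.2 = true
    · rw [show φ e = (e.out.1, e.out.2) from if_pos h]; exact hout e
    · rw [show φ e = (e.out.2, e.out.1) from if_neg h]
      exact (Sym2.eq_swap).trans (hout e)
  have hinj : Function.Injective φ := fun a b hab => by
    rw [← hmk a, ← hmk b, hab]
  have hEfin : H.edgeSet.Finite := Set.toFinite _
  have hVfin : H.verts.Finite := Set.toFinite _
  rw [Set.ncard_eq_toFinset_card' H.edgeSet, Set.ncard_eq_toFinset_card' H.verts]
  set EF := H.edgeSet.toFinset
  set VF := H.verts.toFinset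
  have key : EF.image φ ⊆ VF.biUnion fun u => ({u} : Finset V) ×ˢ (univ.filter fun v => o.dir u v = true) := by
    intro p hp
    obtain ⟨e, he, rfl⟩ := Finset.mem_image.mp hp
    rw [Set.mem_toFinset] at he
    have hadj : H.Adj e.out.1 e.out.2 := by
      rw [← Subgraph.mem_edgeSet]
      rwa [hout e]
    have hG : G.Adj e.out.1 e.out.2 := hadj.adj_sub
    rcases (o.adj_iff _ _).mp hG with hd | hd
    · rw [Finset.mem_biUnion]
      refine ⟨e.out.1, Set.mem_toFinset.mpr (H.edge_vert hadj), ?_⟩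
      rw [show φ e = (e.out.1, e.out.2) from if_pos hd]
      exact Finset.mem_product.mpr ⟨Finset.mem_singleton_self _,
        Finset.mem_filter.mpr ⟨Finset.mem_univ _, hd⟩⟩
    · have hd' : o.dir e.out.1 e.out.2 ≠ true := fun hc => o.not_both _ _ ⟨hc, hd⟩
      rw [Finset.mem_biUnion]
      refine ⟨e.out.2, Set.mem_toFinset.mpr (H.edge_vert hadj.symm), ?_⟩
      rw [show φ e = (e.out.2, e.out.1) from if_neg hd']
      exact Finset.mem_product.mpr ⟨Finset.mem_singleton_self _,
        Finset.mem_filter.mpr ⟨Finset.mem_univ _, hd⟩⟩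
  calc EF.card = (EF.image φ).card := (Finset.card_image_of_injective _ hinj).symm
    _ ≤ (VF.biUnion fun u => ({u} : Finset V) ×ˢ (univ.filter fun v => o.dir u v = true)).card :=
        Finset.card_le_card key
    _ ≤ ∑ u ∈ VF, (({u} : Finset V) ×ˢ (univ.filter fun v => o.dir u v = true)).card :=
        Finset.card_biUnion_le
    _ = ∑ u ∈ VF, o.outDeg u := by
        refine Finset.sum_congr rfl fun u _ => ?_
        rw [Finset.card_product, Finset.card_singleton, one_mul]; rfl
    _ ≤ ∑ _u ∈ VF, k := Finset.sum_le_sum fun u _ => ho u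
    _ = k * VF.card := by rw [Finset.sum_const, smul_eq_mul, mul_comm]

theorem hakimi_rev {V : Type*} [Fintype V] (G : SimpleGraph V) (k : ℕ)
    (h : ∀ H : G.Subgraph, H.edgeSet.ncard ≤ k * H.verts.ncard) :
    ∃ o : GOrientation G, ∀ u, o.outDeg u ≤ k := by
  classical
  have hout : ∀ e : Sym2 V, s(e.out.1, e.out.2) = e := fun e => e.out_eq
  set ι := {e : Sym2 V // e ∈ G.edgeSet}
  set t : ι → Finset (V × Fin k) :=
    fun e => ({e.1.out.1, e.1.out.2} : Finset V) ×ˢ (univ : Finset (Fin k)) with ht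
  have hmem : ∀ (e : ι) (v : V) (i : Fin k), (v, i) ∈ t e ↔ v ∈ e.1 := by
    intro e v i
    rw [ht, Finset.mem_product]
    simp only [Finset.mem_insert, Finset.mem_singleton, Finset.mem_univ, and_true]
    conv_rhs => rw [← hout e.1]
    exact Sym2.mem_iff.symm
  -- Hall condition
  have hall : ∀ s : Finset ι, s.card ≤ (s.biUnion t).card := by
    intro s
    set s' : Finset (Sym2 V) := s.image Subtype.val with hs'
    have hcard : s'.card = s.card := Finset.card_image_of_injective _ Subtype.val_injective
    set VF : Finset V := s'.biUnion (fun e => {e.out.1, e.out.2}) with hVF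
    have hmemVF : ∀ v : V, v ∈ VF ↔ ∃ e ∈ s', v ∈ e := by
      intro v
      rw [hVF, Finset.mem_biUnion]
      refine exists_congr fun e => and_congr_right fun _ => ?_
      simp only [Finset.mem_insert, Finset.mem_singleton]
      conv_rhs => rw [← hout e]
      exact Sym2.mem_iff.symm
    set H : G.Subgraph :=
      { verts := ↑VF
        Adj := fun u v => s(u, v) ∈ s'
        adj_sub := by
          intro u v huv
          rw [hs', Finset.mem_image] at huv
          obtain ⟨e, _, he⟩ := huv
          exact (SimpleGraph.mem_edgeSet G).mp (he ▸ e.2)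
        edge_vert := by
          intro u v huv
          exact Finset.mem_coe.mpr ((hmemVF u).mpr ⟨s(u, v), huv, Sym2.mem_mk_left u v⟩)
        symm := ⟨fun u v huv => by
          show s(v, u) ∈ s'
          rw [Sym2.eq_swap]; exact huv⟩ } with hH
    have hedge : H.edgeSet = ↑s' := by
      ext e
      induction e using Sym2.ind with
      | _ u v => rw [Subgraph.mem_edgeSet]; rfl
    have h1 : H.edgeSet.ncard = s.card := by
      rw [hedge, Set.ncard_coe_finset, hcard]
    have h2 : H.verts.ncard = VF.card := Set.ncard_coe_finset _
    have hb : s.biUnion t = VF ×ˢ (univ : Finset (Fin k)) := by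
      ext ⟨v, i⟩
      rw [Finset.mem_biUnion, Finset.mem_product]
      simp only [Finset.mem_univ, and_true]
      rw [hmemVF]
      constructor
      · rintro ⟨e, he, hv⟩
        exact ⟨e.1, Finset.mem_image_of_mem _ he, (hmem e v i).mp hv⟩
      · rintro ⟨e, he, hv⟩
        rw [hs', Finset.mem_image] at he
        obtain ⟨e', he', rfl⟩ := he
        exact ⟨e', he', (hmem e' v i).mpr hv⟩
    have := h H
    rw [h1, h2] at this
    rw [hb, Finset.card_product, Finset.card_univ, Fintype.card_fin, mul_comm]
    exact this
  obtain ⟨f, hfinj, hft⟩ := (Finset.all_card_le_biUnion_card_iff_exists_injective t).mp hall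
  have hf1 : ∀ e : ι, (f e).1 ∈ e.1 := fun e =>
    (hmem e (f e).1 (f e).2).mp (hft e)
  set dir : V → V → Bool := fun u v =>
    if h : G.Adj u v then decide ((f ⟨s(u, v), (SimpleGraph.mem_edgeSet G).mpr h⟩).1 = u)
    else false with hdir
  have hdir_true : ∀ u v (hadj : G.Adj u v),
      dir u v = true ↔ (f ⟨s(u, v), (SimpleGraph.mem_edgeSet G).mpr hadj⟩).1 = u := by
    intro u v hadj
    rw [hdir]; simp only [hadj, dif_pos, decide_eq_true_eq]
  have hdir_adj : ∀ u v, dir u v = true → G.Adj u v := by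
    intro u v hd
    by_contra hadj
    rw [hdir] at hd; simp only [hadj, dif_neg] at hd
    exact Bool.false_ne_true hd
  have hsub_swap : ∀ (u v : V) (hadj : G.Adj u v),
      (⟨s(v, u), (SimpleGraph.mem_edgeSet G).mpr hadj.symm⟩ : ι)
        = ⟨s(u, v), (SimpleGraph.mem_edgeSet G).mpr hadj⟩ :=
    fun u v hadj => Subtype.ext (Sym2.eq_swap)
  refine ⟨⟨dir, ?_, ?_⟩, ?_⟩
  · intro u v
    constructor
    · intro hadj
      rcases Sym2.mem_iff.mp (hf1 ⟨s(u, v), (SimpleGraph.mem_edgeSet G).mpr hadj⟩) with h1 | h1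
      · exact Or.inl ((hdir_true u v hadj).mpr h1)
      · refine Or.inr ((hdir_true v u hadj.symm).mpr ?_)
        rw [hsub_swap u v hadj]; exact h1
    · rintro (hd | hd)
      · exact hdir_adj u v hd
      · exact (hdir_adj v u hd).symm
  · rintro u v ⟨h1, h2⟩
    have hadj := hdir_adj u v h1
    have e1 := (hdir_true u v hadj).mp h1
    have e2 := (hdir_true v u hadj.symm).mp h2
    rw [hsub_swap u v hadj] at e2
    exact hadj.ne (e1.symm.trans e2)
  · intro u
    have : (Finset.univ.filter fun v => dir u v = true).card ≤ (Finset.range k).card := by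
      apply Finset.card_le_card_of_injOn
        (fun v => if h : G.Adj u v then ((f ⟨s(u, v), (SimpleGraph.mem_edgeSet G).mpr h⟩).2 : ℕ) else 0)
      · intro v hv
        have hadj := hdir_adj u v (Finset.mem_filter.mp hv).2
        simp only [hadj, dif_pos, Finset.mem_coe, Finset.mem_range]
        exact (f _).2.isLt
      · intro v hv w hw hvw
        have hav := hdir_adj u v (Finset.mem_filter.mp hv).2
        have haw := hdir_adj u w (Finset.mem_filter.mp hw).2
        simp only [hav, haw, dif_pos] at hvw
        have h2 : (f ⟨s(u, v), _⟩).2 = (f ⟨s(u, w), _⟩).2 := Fin.ext hvw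
        have h1 : (f ⟨s(u, v), (SimpleGraph.mem_edgeSet G).mpr hav⟩).1
            = (f ⟨s(u, w), (SimpleGraph.mem_edgeSet G).mpr haw⟩).1 := by
          rw [(hdir_true u v hav).mp (Finset.mem_filter.mp hv).2,
            (hdir_true u w haw).mp (Finset.mem_filter.mp hw).2]
        have : (⟨s(u, v), _⟩ : ι) = ⟨s(u, w), _⟩ := hfinj (Prod.ext h1 h2)
        exact Sym2.congr_right.mp (Subtype.ext_iff.mp this)
    rwa [Finset.card_range] at this

theorem stmt1 {V : Type*} [Fintype V] (G : SimpleGraph V) (k : ℕ) :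
    (∃ o : GOrientation G, ∀ u, o.outDeg u ≤ k) ↔
      ∀ H : G.Subgraph, H.edgeSet.ncard ≤ k * H.verts.ncard := by
  constructor
  · rintro ⟨o, ho⟩
    exact hakimi_fwd G k o ho
  · exact hakimi_rev G k
end

section
/- Let G = (U ∪ V, E) be a finite bipartite graph and W : U ∪ V → ℕ a weight function such that every edge uv satisfies W(u) = 1 or W(v) = 1. If for every subset S ⊆ U we have Σ_{u∈S} W(u) ≤ Σ_{v∈N(S)} W(v), then there exists a subgraph M of G (a subset of edges) such that every u ∈ U is incident to exactly W(u) edges of M and every v ∈ V is incident to at most W(v) edges of M. -/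
open SimpleGraph Finset

theorem stmt4 {α : Type*} [Fintype α] (G : SimpleGraph α) (U V : Set α)
    (hpart : ∀ x, x ∈ U ∨ x ∈ V) (hdisj : Disjoint U V)
    (hbip : ∀ a b, G.Adj a b → (a ∈ U ∧ b ∈ V) ∨ (a ∈ V ∧ b ∈ U))
    (W : α → ℕ)
    (hW1 : ∀ a b, G.Adj a b → W a = 1 ∨ W b = 1)
    (hHall : ∀ S : Finset α, ↑S ⊆ U →
      ∑ u ∈ S, W u ≤ ∑ v ∈ (Set.toFinite {v | ∃ u ∈ S, G.Adj u v}).toFinset, W v) :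
    ∃ M ⊆ G.edgeSet,
      (∀ u ∈ U, {e ∈ M | u ∈ e}.ncard = W u) ∧
      (∀ v ∈ V, {e ∈ M | v ∈ e}.ncard ≤ W v) := by
  classical
  -- blown-up vertex type
  set X := (a : α) × Fin (W a) with hX
  set ι := {p : X // p.1 ∈ U} with hι
  set t : ι → Finset X := fun p => univ.filter (fun q => G.Adj p.1.1 q.1) with ht
  -- Hall condition for the blow-up
  have hall : ∀ s : Finset ι, s.card ≤ (s.biUnion t).card := by
    intro s
    set S : Finset α := s.image (fun p => p.1.1) with hS
    have hSU : ↑S ⊆ U := by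
      intro a ha
      simp only [hS, coe_image, Set.mem_image, mem_coe] at ha
      obtain ⟨p, _, rfl⟩ := ha
      exact p.2
    have h1 : s.card ≤ ∑ u ∈ S, W u := by
      have : s.card ≤ (S.sigma (fun a => (univ : Finset (Fin (W a))))).card := by
        apply Finset.card_le_card_of_injOn (fun p => p.1)
        · intro p hp
          simp only [mem_sigma, mem_univ, and_true]
          exact mem_coe.2 (mem_sigma.2 ⟨mem_image_of_mem (fun p : ι => p.1.1) hp, mem_univ _⟩)
        · intro p _ q _ h
          exact Subtype.ext h
      simpa [Finset.card_sigma] using this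
    set N := (Set.toFinite {v | ∃ u ∈ S, G.Adj u v}).toFinset with hN
    have h2 : ∑ v ∈ N, W v ≤ (s.biUnion t).card := by
      have hsub : N.sigma (fun a => (univ : Finset (Fin (W a)))) ⊆ s.biUnion t := by
        intro q hq
        simp only [mem_sigma, mem_univ, and_true] at hq
        rw [hN, Set.Finite.mem_toFinset] at hq
        obtain ⟨u, hu, hadj⟩ := hq
        simp only [hS, mem_image] at hu
        obtain ⟨p, hp, rfl⟩ := hu
        exact Finset.mem_biUnion.2 ⟨p, hp, by simp [ht, hadj]⟩
      calc ∑ v ∈ N, W v = (N.sigma (fun a => (univ : Finset (Fin (W a))))).card := by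
            simp [Finset.card_sigma]
        _ ≤ _ := Finset.card_le_card hsub
    exact h1.trans ((hHall S hSU).trans h2)
  obtain ⟨f, hfinj, hft⟩ := (Finset.all_card_le_biUnion_card_iff_exists_injective t).1 hall
  have hadj : ∀ p : ι, G.Adj p.1.1 (f p).1 := by
    intro p
    have := hft p
    simpa [ht] using this
  -- the U endpoint is in U, image endpoint in V
  have hfV : ∀ p : ι, (f p).1 ∈ V := by
    intro p
    rcases hbip _ _ (hadj p) with ⟨_, h⟩ | ⟨h, _⟩
    · exact h
    · exact absurd (Set.disjoint_left.1 hdisj p.2 h) (by simp)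
  -- key injectivity
  have claim1 : ∀ p q : ι, p.1.1 = q.1.1 → (f p).1 = (f q).1 → p = q := by
    intro p q h1 h2
    by_cases hWu : W p.1.1 = 1
    · obtain ⟨⟨a, i⟩, ha⟩ := p
      obtain ⟨⟨b, j⟩, hb⟩ := q
      simp only at h1
      subst h1
      simp only at hWu
      have : i = j := by
        apply Fin.ext
        omega
      subst this
      rfl
    · apply hfinj
      have hp1 : W (f p).1 = 1 := (hW1 _ _ (hadj p)).resolve_left hWu
      have hq1 : W (f q).1 = 1 := by
        have := (hW1 _ _ (hadj q)).resolve_left (h1 ▸ hWu)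
        exact this
      apply Sigma.ext h2
      rw [Fin.heq_ext_iff (by rw [h2])]
      omega
  set M : Set (Sym2 α) := {e | ∃ p : ι, e = s(p.1.1, (f p).1)} with hM
  refine ⟨M, ?_, ?_, ?_⟩
  · rintro e ⟨p, rfl⟩
    exact (hadj p)
  · -- exact degree at u ∈ U
    intro u hu
    have hset : {e ∈ M | u ∈ e} = (fun p : ι => s(p.1.1, (f p).1)) '' {p | p.1.1 = u} := by
      ext e
      constructor
      · rintro ⟨⟨p, rfl⟩, hue⟩
        rcases Sym2.mem_iff.1 hue with h | h
        · exact ⟨p, h.symm, rfl⟩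
        · exact absurd (h ▸ hfV p) (Set.disjoint_left.1 hdisj hu)
      · rintro ⟨p, hp, rfl⟩
        exact ⟨⟨p, rfl⟩, Sym2.mem_iff.2 (Or.inl hp.symm)⟩
    rw [hset]
    rw [Set.ncard_image_of_injOn]
    · have hset2 : {p : ι | p.1.1 = u} = (fun i : Fin (W u) => (⟨⟨u, i⟩, hu⟩ : ι)) '' Set.univ := by
        ext p
        constructor
        · rintro hp
          obtain ⟨⟨a, i⟩, ha⟩ := p
          simp only [Set.mem_setOf_eq] at hp
          subst hp
          exact ⟨i, trivial, rfl⟩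
        · rintro ⟨i, _, rfl⟩
          rfl
      rw [hset2, Set.ncard_image_of_injOn, Set.ncard_univ, Nat.card_eq_fintype_card,
        Fintype.card_fin]
      intro i _ j _ h
      exact @sigma_mk_injective α (fun a => Fin (W a)) u i j (congrArg Subtype.val h)
    · intro p hp q hq h
      rw [Set.mem_setOf_eq] at hp hq
      have h2 : (f p).1 = (f q).1 := by
        have h' : s(u, (f p).1) = s(u, (f q).1) := by simpa [hp, hq] using h
        exact (Sym2.congr_right).1 h' 
      exact claim1 p q (hp.trans hq.symm) h2
  · -- at most W v at v ∈ V
    intro v hv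
    have hsub : {e ∈ M | v ∈ e} ⊆ (fun p : ι => s(p.1.1, (f p).1)) '' {p | (f p).1 = v} := by
      rintro e ⟨⟨p, rfl⟩, hve⟩
      rcases Sym2.mem_iff.1 hve with h | h
      · exact absurd (h ▸ p.2) (Set.disjoint_right.1 hdisj hv)
      · exact ⟨p, h.symm, rfl⟩
    calc {e ∈ M | v ∈ e}.ncard ≤ ((fun p : ι => s(p.1.1, (f p).1)) '' {p | (f p).1 = v}).ncard :=
          Set.ncard_le_ncard hsub (Set.toFinite _)
      _ ≤ {p : ι | (f p).1 = v}.ncard := Set.ncard_image_le (Set.toFinite _)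
      _ ≤ {q : X | q.1 = v}.ncard := by
          apply Set.ncard_le_ncard_of_injOn f
          · intro p hp; exact hp
          · exact fun p _ q _ h => hfinj h
      _ = W v := by
          have : {q : X | q.1 = v} = (fun i : Fin (W v) => (⟨v, i⟩ : X)) '' Set.univ := by
            ext q
            constructor
            · rintro hq
              obtain ⟨a, i⟩ := q
              simp only [Set.mem_setOf_eq] at hq
              subst hq
              exact ⟨i, trivial, rfl⟩
            · rintro ⟨i, _, rfl⟩
              rfl
          rw [this, Set.ncard_image_of_injOn, Set.ncard_univ, Nat.card_eq_fintype_card,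
            Fintype.card_fin]
          intro i _ j _ h
          exact @sigma_mk_injective α (fun a => Fin (W a)) v i j h
end

section
/- Every finite simple planar graph admits an orientation of its edges in which every vertex has outdegree at most 3. -/
open SimpleGraph Finset

section Basics
variable {V V' W : Type*}

lemma reach_mono (G : SimpleGraph V) {A A' : Set V} (h : A ⊆ A') {a b : V}
    (ha : a ∈ A) (hb : b ∈ A)
    (hr : (G.induce A).Reachable ⟨a, ha⟩ ⟨b, hb⟩) :
    (G.induce A').Reachable ⟨a, h ha⟩ ⟨b, h hb⟩ :=
  SimpleGraph.Reachable.map (G := G.induce A) (G' := G.induce A')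
    ⟨fun z => ⟨z.1, h z.2⟩, fun hadj => hadj⟩ hr

lemma hasMinor_trans {G : SimpleGraph V} {G' : SimpleGraph V'} {H : SimpleGraph W}
    (h1 : HasMinor G G') (h2 : HasMinor G' H) : HasMinor G H := by
  obtain ⟨B, hBne, hBconn, hBdisj, hBadj⟩ := h1
  obtain ⟨C, hCne, hCconn, hCdisj, hCadj⟩ := h2
  refine ⟨fun w => ⋃ x ∈ C w, B x, ?_, ?_, ?_, ?_⟩
  · intro w
    obtain ⟨x, hx⟩ := hCne w
    obtain ⟨a, ha⟩ := hBne x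
    exact ⟨a, Set.mem_biUnion hx ha⟩
  · intro w
    set D : Set V := ⋃ x ∈ C w, B x with hD
    haveI : Nonempty D := by
      obtain ⟨x, hx⟩ := hCne w
      obtain ⟨a, ha⟩ := hBne x
      exact ⟨⟨a, Set.mem_biUnion hx ha⟩⟩
    constructor
    -- key: for x y in C w, a walk x→y in G'.induce (C w), points p ∈ B x, q ∈ B y are reachable
    have key : ∀ (x y : (C w : Set V')) (wk : (G'.induce (C w)).Walk x y)
        (p q : V) (hp : p ∈ B x.1) (hq : q ∈ B y.1),
        ∀ (hp' : p ∈ D) (hq' : q ∈ D), (G.induce D).Reachable ⟨p, hp'⟩ ⟨q, hq'⟩ := by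
      intro x y wk
      induction wk with
      | @nil x =>
        intro p q hp hq hp' hq'
        have hsub : B x.1 ⊆ D := Set.subset_biUnion_of_mem (u := fun x' => B x') x.2
        have := (hBconn x.1).preconnected ⟨p, hp⟩ ⟨q, hq⟩
        exact reach_mono G hsub hp hq this
      | @cons x z y hadj wk ih =>
        intro p q hp hq hp' hq'
        have hadj' : G'.Adj x.1 z.1 := hadj
        obtain ⟨a, ha, b, hb, hab⟩ := hBadj x.1 z.1 hadj'
        have hsubx : B x.1 ⊆ D := Set.subset_biUnion_of_mem (u := fun x' => B x') x.2
        have hsubz : B z.1 ⊆ D := Set.subset_biUnion_of_mem (u := fun x' => B x') z.2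
        have r1 : (G.induce D).Reachable ⟨p, hp'⟩ ⟨a, hsubx ha⟩ := by
          have := (hBconn x.1).preconnected ⟨p, hp⟩ ⟨a, ha⟩
          exact reach_mono G hsubx hp ha this
        have r2 : (G.induce D).Reachable ⟨a, hsubx ha⟩ ⟨b, hsubz hb⟩ :=
          SimpleGraph.Adj.reachable (by exact hab)
        have r3 := ih b q hb hq (hsubz hb) hq'
        exact (r1.trans r2).trans r3
    intro p q
    obtain ⟨_, ⟨x, rfl⟩, _, ⟨hx, rfl⟩, hpx⟩ := p.2
    obtain ⟨_, ⟨y, rfl⟩, _, ⟨hy, rfl⟩, hqy⟩ := q.2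
    obtain ⟨wk⟩ := (hCconn w).preconnected ⟨x, hx⟩ ⟨y, hy⟩
    have := key ⟨x, hx⟩ ⟨y, hy⟩ wk p.1 q.1 hpx hqy p.2 q.2
    simpa using this
  · intro w₁ w₂ hne
    rw [Set.disjoint_left]
    rintro a ha1 ha2
    obtain ⟨_, ⟨x, rfl⟩, _, ⟨hx, rfl⟩, hax⟩ := ha1
    obtain ⟨_, ⟨y, rfl⟩, _, ⟨hy, rfl⟩, hay⟩ := ha2
    have hxy : x ≠ y := fun h => (Set.disjoint_left.mp (hCdisj w₁ w₂ hne) hx) (h ▸ hy)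
    exact Set.disjoint_left.mp (hBdisj x y hxy) hax hay
  · intro w₁ w₂ hadj
    obtain ⟨x, hx, y, hy, hxy⟩ := hCadj w₁ w₂ hadj
    obtain ⟨a, ha, b, hb, hab⟩ := hBadj x y hxy
    exact ⟨a, Set.mem_biUnion hx ha, b, Set.mem_biUnion hy hb, hab⟩

lemma singleton_conn (G : SimpleGraph V) (v : V) : (G.induce {v}).Connected := by
  haveI : Nonempty ({v} : Set V) := ⟨⟨v, rfl⟩⟩
  constructor
  intro a b
  have : a = b := Subtype.ext (by rw [a.2, b.2])
  exact this ▸ SimpleGraph.Reachable.refl a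

lemma pair_conn (G : SimpleGraph V) {u v : V} (h : G.Adj u v) :
    (G.induce {u, v}).Connected := by
  haveI : Nonempty ({u, v} : Set V) := ⟨⟨u, Or.inl rfl⟩⟩
  constructor
  have key : ∀ a : ({u, v} : Set V), (G.induce {u, v}).Reachable ⟨u, Or.inl rfl⟩ a := by
    rintro ⟨a, (rfl | rfl)⟩
    · exact SimpleGraph.Reachable.refl _
    · exact SimpleGraph.Adj.reachable (by exact h)
  intro a b
  exact (key a).symm.trans (key b)

/-- minor via subgraph relation (same vertex set) -/
lemma hasMinor_of_le {G G' : SimpleGraph V} (h : G' ≤ G) : HasMinor G G' := by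
  refine ⟨fun v => {v}, fun v => ⟨v, rfl⟩, fun v => singleton_conn G v, ?_, ?_⟩
  · intro a b hab
    simpa [Set.disjoint_left] using hab
  · intro a b hab
    exact ⟨a, rfl, b, rfl, h hab⟩

/-- induced subgraph is a minor -/
lemma hasMinor_induce (G : SimpleGraph V) (S : Set V) : HasMinor G (G.induce S) := by
  refine ⟨fun x => {x.1}, fun x => ⟨x.1, rfl⟩, fun x => singleton_conn G x.1, ?_, ?_⟩
  · intro a b hab
    simp [Set.disjoint_left]
    exact fun h => hab (Subtype.ext h)
  · intro a b hab
    exact ⟨a.1, rfl, b.1, rfl, hab⟩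

/-- connectivity transfer through induce-induce -/
lemma induce_induce_conn (G : SimpleGraph V) (S : Set V) (B : Set S)
    (h : ((G.induce S).induce B).Connected) :
    (G.induce (Subtype.val '' B)).Connected := by
  haveI : Nonempty B := h.nonempty
  haveI : Nonempty (Subtype.val '' B : Set V) := by
    obtain ⟨⟨x, hx⟩⟩ := h.nonempty
    exact ⟨⟨x.1, x, hx, rfl⟩⟩
  constructor
  rintro ⟨a, ha⟩ ⟨b, hb⟩
  obtain ⟨a', ha', rfl⟩ := ha
  obtain ⟨b', hb', rfl⟩ := hb
  have := h.preconnected ⟨a', ha'⟩ ⟨b', hb'⟩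
  have := SimpleGraph.Reachable.map (G := (G.induce S).induce B)
    (G' := G.induce (Subtype.val '' B))
    ⟨fun z => ⟨z.1.1, z.1, z.2, rfl⟩, fun hadj => hadj⟩ this
  exact this

/-- contraction of edge uv into u, on vertex type avoiding v -/
def contractG (G : SimpleGraph V) (u v : V) : SimpleGraph {x : V // x ≠ v} where
  Adj x y := G.Adj x.1 y.1 ∨ (x.1 = u ∧ G.Adj v y.1 ∧ y.1 ≠ u) ∨ (y.1 = u ∧ G.Adj v x.1 ∧ x.1 ≠ u)
  symm := by
    constructor
    rintro x y (h | h | h)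
    · exact Or.inl h.symm
    · exact Or.inr (Or.inr h)
    · exact Or.inr (Or.inl h)
  loopless := by
    constructor
    rintro x (h | ⟨h1, h2, h3⟩ | ⟨h1, h2, h3⟩)
    · exact G.loopless.irrefl _ h
    · exact h3 h1
    · exact h3 h1

lemma hasMinor_contract (G : SimpleGraph V) {u v : V} (huv : G.Adj u v) :
    HasMinor G (contractG G u v) := by
  have hne : u ≠ v := G.ne_of_adj huv
  haveI := Classical.decEq V
  refine ⟨fun x => if x.1 = u then {u, v} else {x.1}, ?_, ?_, ?_, ?_⟩
  · intro x
    by_cases h : x.1 = u <;> simp [h]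
  · intro x
    dsimp only
    by_cases h : x.1 = u
    · rw [if_pos h]; exact pair_conn G huv
    · rw [if_neg h]; exact singleton_conn G x.1
  · intro a b hab
    have hval : a.1 ≠ b.1 := fun h => hab (Subtype.ext h)
    dsimp only
    by_cases h1 : a.1 = u <;> by_cases h2 : b.1 = u <;>
      simp only [if_pos, if_neg, h1, h2, if_true, if_false] <;> rw [Set.disjoint_left]
    · exact absurd (h1.trans h2.symm) hval
    · rintro z (rfl | rfl) hz <;> simp only [Set.mem_singleton_iff] at hz
      · exact h2 hz.symm
      · exact b.2 hz.symm
    · rintro z hz (rfl | rfl) <;> simp only [Set.mem_singleton_iff] at hz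
      · exact h1 hz.symm
      · exact a.2 hz.symm
    · rintro z hz hz2
      simp only [Set.mem_singleton_iff] at hz hz2
      exact hval (hz ▸ hz2 ▸ rfl)
  · rintro a b (h | ⟨h1, h2, h3⟩ | ⟨h1, h2, h3⟩)
    · refine ⟨a.1, ?_, b.1, ?_, h⟩ <;> dsimp only <;>
        [by_cases hc : a.1 = u; by_cases hc : b.1 = u] <;> simp [hc]
    · refine ⟨v, ?_, b.1, ?_, h2⟩ <;> dsimp only
      · simp [h1]
      · simp [h3]
    · refine ⟨a.1, ?_, v, ?_, h2.symm⟩ <;> dsimp only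
      · simp [h3]
      · simp [h1]


end Basics

section counting
variable [Fintype V] [DecidableEq V] (G : SimpleGraph V) [DecidableRel G.Adj]

instance contract_adjdec (u v : V) : DecidableRel (contractG G u v).Adj := fun x y => by
  unfold contractG
  exact inferInstanceAs (Decidable (_ ∨ _))

/-- L1 : edge count of induced graph on coerced finset -/
lemma induce_edge_card (S : Set V) [DecidablePred (· ∈ S)] [Fintype ↥S] :
    ((G.induce S).edgeFinset).card
      = (G.edgeFinset.filter (fun e => ∀ x ∈ e, x ∈ S)).card := by
  apply Finset.card_bij (fun e _ => Sym2.map Subtype.val e)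
  · intro e he
    induction e using Sym2.ind with
    | _ a b =>
      rw [SimpleGraph.mem_edgeFinset, SimpleGraph.mem_edgeSet] at he
      have : G.Adj a.1 b.1 := he
      simp only [Sym2.map_pair_eq, Finset.mem_filter, SimpleGraph.mem_edgeFinset,
        SimpleGraph.mem_edgeSet]
      exact ⟨this, by rintro x hx; rw [Sym2.mem_iff] at hx; rcases hx with rfl | rfl
                      exacts [a.2, b.2]⟩
  · intro e1 h1 e2 h2 heq
    exact Sym2.map.injective Subtype.val_injective heq
  · intro e he
    simp only [Finset.mem_filter, SimpleGraph.mem_edgeFinset, SimpleGraph.mem_edgeSet] at he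
    obtain ⟨hadj, hmem⟩ := he
    induction e using Sym2.ind with
    | _ a b =>
      have ha : a ∈ S := hmem a (Sym2.mem_mk_left a b)
      have hb : b ∈ S := hmem b (Sym2.mem_mk_right a b)
      refine ⟨s(⟨a, ha⟩, ⟨b, hb⟩), ?_, ?_⟩
      · rw [SimpleGraph.mem_edgeFinset, SimpleGraph.mem_edgeSet]
        exact hadj
      · rw [Sym2.map_pair_eq]

lemma avoid_edge_card (v : V) :
    (G.edgeFinset.filter (fun e => ∀ x ∈ e, x ≠ v)).card = G.edgeFinset.card - G.degree v := by
  have : G.edgeFinset.filter (fun e => ∀ x ∈ e, x ≠ v) = G.edgeFinset \ G.incidenceFinset v := by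
    ext e
    simp only [Finset.mem_filter, Finset.mem_sdiff, SimpleGraph.mem_incidenceFinset,
      SimpleGraph.incidenceSet, Set.mem_setOf_eq, SimpleGraph.mem_edgeFinset]
    constructor
    · rintro ⟨h1, h2⟩
      exact ⟨h1, fun hc => h2 v hc.2 rfl⟩
    · rintro ⟨h1, h2⟩
      exact ⟨h1, fun x hx hxv => h2 ⟨h1, hxv ▸ hx⟩⟩
  rw [this, Finset.card_sdiff_of_subset]
  · rw [SimpleGraph.card_incidenceFinset_eq_degree]
  · intro e he
    rw [SimpleGraph.mem_incidenceFinset] at he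
    simpa using he.1

lemma contract_edge_card (u v : V) (huv : G.Adj u v) :
    G.edgeFinset.card ≤ (contractG G u v).edgeFinset.card + 1
      + (G.neighborFinset u ∩ G.neighborFinset v).card := by
  have hne : u ≠ v := G.ne_of_adj huv
  set C := G.neighborFinset u ∩ G.neighborFinset v with hC
  set S := G.edgeFinset.erase s(u, v) with hS
  set S2 := C.image (fun w => s(v, w)) with hS2
  set m : V → {x : V // x ≠ v} := fun x => if h : x = v then ⟨u, hne⟩ else ⟨x, h⟩ with hm
  have m_of_ne : ∀ x (h : x ≠ v), m x = ⟨x, h⟩ := fun x h => dif_neg h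
  have m_of_v : m v = ⟨u, hne⟩ := dif_pos rfl
  have m_inj : ∀ x y, m x = m y → x = y ∨ (x = v ∧ y = u) ∨ (x = u ∧ y = v) := by
    intro x y hxy
    by_cases hx : x = v <;> by_cases hy : y = v
    · exact Or.inl (hx.trans hy.symm)
    · rw [hx, m_of_v, m_of_ne y hy] at hxy
      exact Or.inr (Or.inl ⟨hx, (congrArg Subtype.val hxy).symm⟩)
    · rw [hy, m_of_v, m_of_ne x hx] at hxy
      exact Or.inr (Or.inr ⟨(congrArg Subtype.val hxy), hy⟩)
    · rw [m_of_ne x hx, m_of_ne y hy] at hxy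
      exact Or.inl (congrArg Subtype.val hxy)
  -- membership facts
  have hmemS : ∀ a b, s(a,b) ∈ S \ S2 → G.Adj a b ∧ s(a,b) ≠ s(u,v) ∧ s(a,b) ∉ S2 := by
    intro a b h
    rw [Finset.mem_sdiff, hS, Finset.mem_erase] at h
    refine ⟨?_, h.1.1, h.2⟩
    have := h.1.2
    rwa [SimpleGraph.mem_edgeFinset, SimpleGraph.mem_edgeSet] at this
  have hS2mem : ∀ a, G.Adj u a → G.Adj v a → s(a, v) ∈ S2 := by
    intro a h1 h2
    rw [hS2, Finset.mem_image]
    refine ⟨a, ?_, Sym2.eq_swap⟩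
    rw [hC, Finset.mem_inter, SimpleGraph.mem_neighborFinset, SimpleGraph.mem_neighborFinset]
    exact ⟨h1, h2⟩
  have core : ∀ a b c d, s(a,b) ∈ S \ S2 → s(c,d) ∈ S \ S2 →
      m a = m c → m b = m d → s(a,b) = s(c,d) := by
    intro a b c d h1 h2 hac hbd
    obtain ⟨hadj1, hne1, hs1⟩ := hmemS a b h1
    obtain ⟨hadj2, hne2, hs2⟩ := hmemS c d h2
    rcases m_inj a c hac with heq | ⟨hav, hcu⟩ | ⟨hau, hcv⟩
    · rcases m_inj b d hbd with heq2 | ⟨hbv, hdu⟩ | ⟨hbu, hdv⟩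
      · rw [heq, heq2]
      · -- b = v, d = u : e1 = s(a,v), e2 = s(a,u)
        refine absurd (show s(a, b) ∈ S2 from ?_) hs1
        rw [hbv]
        apply hS2mem a
        · rw [← hdu, heq]; exact hadj2.symm
        · rw [← hbv]; exact hadj1.symm
      · -- b = u, d = v : e2 = s(a,v), e1 = s(a,u)
        refine absurd (show s(c, d) ∈ S2 from ?_) hs2
        rw [hdv]
        apply hS2mem c
        · rw [← hbu, ← heq]; exact hadj1.symm
        · rw [← hdv]; exact hadj2.symm
    · rcases m_inj b d hbd with heq2 | ⟨hbv, hdu⟩ | ⟨hbu, hdv⟩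
      · -- a = v, c = u, b = d
        refine absurd (show s(a, b) ∈ S2 from ?_) hs1
        rw [hav, Sym2.eq_swap]
        apply hS2mem b
        · rw [← hcu, heq2]; exact hadj2
        · rw [← hav]; exact hadj1
      · -- a = v, b = v
        rw [hav, hbv] at hadj1
        exact absurd hadj1 (G.loopless.irrefl v)
      · -- a = v, b = u: e1 = s(v,u) = s(u,v)
        exact absurd (by rw [hav, hbu, Sym2.eq_swap]) hne1
    · rcases m_inj b d hbd with heq2 | ⟨hbv, hdu⟩ | ⟨hbu, hdv⟩
      · -- a = u, c = v, b = d: e2 = s(v, d) = s(v, b)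
        refine absurd (show s(c, d) ∈ S2 from ?_) hs2
        rw [hcv, Sym2.eq_swap]
        apply hS2mem d
        · rw [← hau, ← heq2]; exact hadj1
        · rw [← hcv]; exact hadj2
      · -- a = u, b = v
        exact absurd (by rw [hau, hbv]) hne1
      · -- a = u, b = u
        rw [hau, hbu] at hadj1
        exact absurd hadj1 (G.loopless.irrefl u)
  have hmap : ∀ e ∈ S \ S2, Sym2.map m e ∈ (contractG G u v).edgeFinset := by
    intro e he
    induction e using Sym2.ind with
    | _ a b =>
      obtain ⟨hadj, hneuv, _⟩ := hmemS a b he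
      rw [Sym2.map_pair_eq, SimpleGraph.mem_edgeFinset, SimpleGraph.mem_edgeSet]
      by_cases ha : a = v
      · have hbv : b ≠ v := by intro h; rw [ha, h] at hadj; exact G.loopless.irrefl v hadj
        have hbu : b ≠ u := by
          rintro rfl
          exact hneuv (by rw [ha, Sym2.eq_swap])
        rw [ha, m_of_v, m_of_ne b hbv]
        refine Or.inr (Or.inl ⟨rfl, show G.Adj v b from ?_, hbu⟩)
        rw [← ha]; exact hadj
      · by_cases hb : b = v
        · have hau : a ≠ u := by
            rintro rfl
            exact hneuv (by rw [hb])
          rw [hb, m_of_v, m_of_ne a ha]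
          exact Or.inr (Or.inr ⟨rfl, (hb ▸ hadj).symm, hau⟩)
        · rw [m_of_ne a ha, m_of_ne b hb]
          exact Or.inl hadj
  have hinj : Set.InjOn (Sym2.map m) ↑(S \ S2) := by
    intro e1 he1 e2 he2 heq
    induction e1 using Sym2.ind with
    | _ a b =>
      induction e2 using Sym2.ind with
      | _ c d =>
        rw [Sym2.map_pair_eq, Sym2.map_pair_eq, Sym2.eq_iff] at heq
        rcases heq with ⟨h1, h2⟩ | ⟨h1, h2⟩
        · exact core a b c d he1 he2 h1 h2
        · rw [(Sym2.eq_swap : s(c,d) = s(d,c))] at he2 ⊢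
          exact core a b d c he1 he2 h1 h2
  have hco : (S \ S2).card ≤ (contractG G u v).edgeFinset.card :=
    Finset.card_le_card_of_injOn _ hmap hinj
  have h1 : S.card = G.edgeFinset.card - 1 := by
    rw [hS, Finset.card_erase_of_mem]
    rwa [SimpleGraph.mem_edgeFinset, SimpleGraph.mem_edgeSet]
  have h2 : S.card ≤ (S \ S2).card + S2.card := Finset.card_le_card_sdiff_add_card
  have h3 : S2.card ≤ C.card := Finset.card_image_le
  have h4 : 1 ≤ G.edgeFinset.card :=
    Finset.card_pos.mpr ⟨s(u,v), by rw [SimpleGraph.mem_edgeFinset, SimpleGraph.mem_edgeSet]; exact huv⟩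
  omega


end counting

universe u

lemma card_ne_vtx {V : Type u} [Fintype V] [DecidableEq V] (v : V) :
    Fintype.card {x : V // x ≠ v} = Fintype.card V - 1 := by
  have h1 : Fintype.card {x : V // x = v} = 1 := Fintype.card_subtype_eq v
  have := Fintype.card_subtype_compl (fun x : V => x = v)
  rw [h1] at this
  exact this


lemma clique_minor {V W : Type*} (G : SimpleGraph V) (p : W → V)
    (hinj : Function.Injective p) (hadj : ∀ i j, i ≠ j → G.Adj (p i) (p j)) :
    HasMinor G (completeGraph W) := by
  refine ⟨fun i => {p i}, fun i => ⟨p i, rfl⟩, fun i => singleton_conn G (p i), ?_, ?_⟩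
  · intro i j hij
    simp only [Set.disjoint_left, Set.mem_singleton_iff]
    rintro z rfl h
    exact hij (hinj h)
  · intro i j hij
    exact ⟨p i, rfl, p j, rfl, hadj i j (by simpa using hij)⟩


lemma k4_from_pts {V : Type*} (G : SimpleGraph V) {u a b c : V}
    (hua : G.Adj u a) (hub : G.Adj u b) (huc : G.Adj u c)
    (hab : G.Adj a b) (hac : G.Adj a c) (hbc : G.Adj b c) :
    HasMinor G (completeGraph (Fin 4)) := by
  have h1 : u ≠ a := hua.ne
  have h2 : u ≠ b := hub.ne
  have h3 : u ≠ c := huc.ne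
  have h4 : a ≠ b := hab.ne
  have h5 : a ≠ c := hac.ne
  have h6 : b ≠ c := hbc.ne
  apply clique_minor G ![u, a, b, c]
  · intro i j hij
    fin_cases i <;> fin_cases j <;> simp_all
  · intro i j hij
    fin_cases i <;> fin_cases j <;> simp_all [G.adj_comm]

theorem K4helper : ∀ (n : ℕ) {V : Type u} [Fintype V] [DecidableEq V] (G : SimpleGraph V)
    [DecidableRel G.Adj], Fintype.card V ≤ n → 2 ≤ Fintype.card V →
    2 * Fintype.card V ≤ G.edgeFinset.card + 2 → HasMinor G (completeGraph (Fin 4)) := by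
  intro n
  induction n using Nat.strong_induction_on with
  | _ n IHn =>
  have inner : ∀ (E : ℕ) {V : Type u} [Fintype V] [DecidableEq V] (G : SimpleGraph V)
      [DecidableRel G.Adj], Fintype.card V ≤ n → G.edgeFinset.card ≤ E →
      2 ≤ Fintype.card V → 2 * Fintype.card V ≤ G.edgeFinset.card + 2 →
      HasMinor G (completeGraph (Fin 4)) := by
    intro E
    induction E with
    | zero =>
      intro V _ _ G _ hn hE hc hd
      omega
    | succ E ihE =>
      intro V _ _ G _ hn hE hc hd
      by_cases hEle : G.edgeFinset.card ≤ E
      · exact ihE G hn hEle hc hd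
      -- n ≥ 4
      have hchoose := SimpleGraph.card_edgeFinset_le_card_choose_two (G := G)
      have hn4 : 4 ≤ Fintype.card V := by
        by_contra hlt
        push_neg at hlt
        have h23 : Fintype.card V = 2 ∨ Fintype.card V = 3 := by omega
        rcases h23 with h | h
        · rw [h] at hchoose hd
          have h2 : (2:ℕ).choose 2 = 1 := rfl
          omega
        · rw [h] at hchoose hd
          have h2 : (3:ℕ).choose 2 = 3 := rfl
          omega
      by_cases hdel : 2 * Fintype.card V ≤ G.edgeFinset.card + 1
      · -- delete an edge
        obtain ⟨ed, hed⟩ : G.edgeFinset.Nonempty := by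
          rw [← Finset.card_pos]; omega
        haveI : DecidableRel (G.deleteEdges ({ed} : Finset (Sym2 V)) : SimpleGraph V).Adj :=
          fun a b => Classical.dec _
        set G' := G.deleteEdges ({ed} : Finset (Sym2 V)) with hG'
        have hcard' : G'.edgeFinset.card = G.edgeFinset.card - 1 := by
          have : G'.edgeFinset = G.edgeFinset \ ({ed} : Finset (Sym2 V)) := by
            have := SimpleGraph.edgeFinset_deleteEdges (G := G) ({ed} : Finset (Sym2 V))
            convert this
          rw [this, Finset.card_sdiff_of_subset (by simpa using hed)]
          simp
        have := ihE G' hn (by omega) hc (by omega)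
        exact hasMinor_trans (hasMinor_of_le (SimpleGraph.deleteEdges_le _)) this
      push_neg at hdel
      by_cases hv : ∃ v : V, G.degree v ≤ 2
      · obtain ⟨v, hvdeg⟩ := hv
        set S : Set V := {x : V | x ≠ v} with hSdef
        haveI : DecidablePred (· ∈ S) := fun x => decidable_of_iff (x ≠ v) Iff.rfl
        have hcardS : Fintype.card ↥S = Fintype.card V - 1 := by
          rw [← card_ne_vtx (v := v)]
          exact Fintype.card_congr (Equiv.subtypeEquivRight (by intro x; simp [hSdef]))
        have heq3 : Finset.filter (fun e => ∀ x ∈ e, x ∈ S) G.edgeFinset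
            = Finset.filter (fun e => ∀ x ∈ e, x ≠ v) G.edgeFinset := by
          apply Finset.filter_congr
          intro e _
          simp [hSdef]
        have he' : (G.induce S).edgeFinset.card = G.edgeFinset.card - G.degree v := by
          rw [induce_edge_card G S, heq3, avoid_edge_card G v]
        have hrec := IHn (n-1) (by omega) (G.induce S) (by omega) (by omega) (by omega)
        exact hasMinor_trans (hasMinor_induce G S) hrec
      · push_neg at hv
        have hsum := G.sum_degrees_eq_twice_card_edges
        have hu3 : ∃ u, G.degree u = 3 := by
          by_contra hall
          push_neg at hall
          have h4 : ∀ w ∈ Finset.univ, 4 ≤ G.degree w := by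
            intro w _
            have h1 := hv w
            have h2 := hall w
            omega
          have hle := Finset.card_nsmul_le_sum Finset.univ (fun w => G.degree w) 4 h4
          rw [Finset.card_univ, smul_eq_mul] at hle
          omega
        by_cases hedge : ∃ a b, G.Adj a b ∧ (G.neighborFinset a ∩ G.neighborFinset b).card ≤ 1
        · obtain ⟨a, b, hab, hcom⟩ := hedge
          have hcount := contract_edge_card G a b hab
          have hcard' : Fintype.card {x : V // x ≠ b} = Fintype.card V - 1 := card_ne_vtx b
          have hrec := IHn (n-1) (by omega) (contractG G a b) (by omega) (by omega) (by omega)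
          exact hasMinor_trans (hasMinor_contract G hab) hrec
        · push_neg at hedge
          obtain ⟨u, hu⟩ := hu3
          have hcard3 : (G.neighborFinset u).card = 3 := hu
          obtain ⟨a, b, c, hab', hac', hbc', hN⟩ := Finset.card_eq_three.mp hcard3
          have hmemN : ∀ x, x ∈ G.neighborFinset u ↔ (x = a ∨ x = b ∨ x = c) := by
            intro x; rw [hN]; simp
          have hua : G.Adj u a := by rw [← SimpleGraph.mem_neighborFinset, hN]; simp
          have hub : G.Adj u b := by rw [← SimpleGraph.mem_neighborFinset, hN]; simp
          have huc : G.Adj u c := by rw [← SimpleGraph.mem_neighborFinset, hN]; simp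
          have step : ∀ x y z : V, G.Adj u x → (∀ w, w ∈ G.neighborFinset u ↔ (w = x ∨ w = y ∨ w = z)) →
              y ≠ z → G.Adj x y ∧ G.Adj x z := by
            intro x y z hux hmem hyz
            have hsubset : G.neighborFinset u ∩ G.neighborFinset x ⊆ ({y, z} : Finset V) := by
              intro w hw
              rw [Finset.mem_inter] at hw
              have hw1 := (hmem w).mp hw.1
              have hwx : w ≠ x := by
                intro h
                have hax := (G.mem_neighborFinset x w).mp hw.2
                exact G.loopless.irrefl x (h ▸ hax)
              rcases hw1 with rfl | rfl | rfl
              · exact absurd rfl hwx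
              · simp
              · simp
            have hcard2 : ({y, z} : Finset V).card = 2 := Finset.card_pair hyz
            have hge := hedge u x hux
            have heq : G.neighborFinset u ∩ G.neighborFinset x = ({y, z} : Finset V) :=
              Finset.eq_of_subset_of_card_le hsubset (by omega)
            constructor
            · have : y ∈ G.neighborFinset u ∩ G.neighborFinset x := by rw [heq]; simp
              rw [Finset.mem_inter] at this
              exact (G.mem_neighborFinset x y).mp this.2
            · have : z ∈ G.neighborFinset u ∩ G.neighborFinset x := by rw [heq]; simp
              rw [Finset.mem_inter] at this
              exact (G.mem_neighborFinset x z).mp this.2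
          obtain ⟨hAab, hAac⟩ := step a b c hua hmemN hbc'
          obtain ⟨hAba, hAbc⟩ := step b a c hub (by intro w; rw [hmemN w]; exact or_left_comm) hac'
          exact k4_from_pts G hua hub huc hAab hAac hAbc
  intro V _ _ G _ h1 h2 h3
  exact inner G.edgeFinset.card G h1 le_rfl h2 h3

lemma k5_of_k4_nbhd {V : Type*} (G : SimpleGraph V) (u : V) (S : Set V)
    (hS : ∀ x, x ∈ S ↔ G.Adj u x)
    (h : HasMinor (G.induce S) (completeGraph (Fin 4))) :
    HasMinor G (completeGraph (Fin 5)) := by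
  obtain ⟨B, hBne, hBconn, hBdisj, hBadj⟩ := h
  have huS : u ∉ S := fun hu => G.loopless.irrefl u ((hS u).mp hu)
  refine ⟨fun i => if h : (i : ℕ) < 4 then Subtype.val '' B ⟨(i : ℕ), h⟩ else {u},
    ?_, ?_, ?_, ?_⟩ <;> dsimp only
  · intro i
    by_cases hi : (i : ℕ) < 4
    · rw [dif_pos hi]
      obtain ⟨x, hx⟩ := hBne ⟨(i : ℕ), hi⟩
      exact ⟨x.1, x, hx, rfl⟩
    · rw [dif_neg hi]
      exact ⟨u, rfl⟩
  · intro i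
    by_cases hi : (i : ℕ) < 4
    · rw [dif_pos hi]
      exact induce_induce_conn G S _ (hBconn _)
    · rw [dif_neg hi]
      exact singleton_conn G u
  · intro i j hij
    by_cases hi : (i : ℕ) < 4 <;> by_cases hj : (j : ℕ) < 4
    · rw [dif_pos hi, dif_pos hj]
      have hne' : (⟨(i : ℕ), hi⟩ : Fin 4) ≠ ⟨(j : ℕ), hj⟩ := by
        intro h
        apply hij
        have hval := congrArg Fin.val h
        simp only [] at hval
        exact Fin.ext hval
      have := hBdisj _ _ hne'
      rw [Set.disjoint_left] at this ⊢
      rintro z ⟨x, hx, rfl⟩ ⟨y, hy, hyx⟩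
      have : x = y := Subtype.ext hyx.symm
      exact (Set.disjoint_left.mp (hBdisj _ _ hne') hx) (this ▸ hy)
    · rw [dif_pos hi, dif_neg hj, Set.disjoint_left]
      rintro z ⟨x, hx, rfl⟩ hz
      rw [Set.mem_singleton_iff] at hz
      exact huS (hz ▸ x.2)
    · rw [dif_neg hi, dif_pos hj, Set.disjoint_left]
      rintro z hz ⟨x, hx, rfl⟩
      rw [Set.mem_singleton_iff] at hz
      exact huS (hz ▸ x.2)
    · exact absurd (Fin.ext (by omega)) hij
  · intro i j hij
    have hij' : i ≠ j := by simpa using hij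
    by_cases hi : (i : ℕ) < 4 <;> by_cases hj : (j : ℕ) < 4
    · rw [dif_pos hi, dif_pos hj]
      have hne' : (⟨(i : ℕ), hi⟩ : Fin 4) ≠ ⟨(j : ℕ), hj⟩ := by
        intro h
        apply hij'
        have hval := congrArg Fin.val h
        simp only [] at hval
        exact Fin.ext hval
      obtain ⟨x, hx, y, hy, hxy⟩ := hBadj _ _ hne'
      exact ⟨x.1, ⟨x, hx, rfl⟩, y.1, ⟨y, hy, rfl⟩, hxy⟩
    · rw [dif_pos hi, dif_neg hj]
      obtain ⟨x, hx⟩ := hBne ⟨(i : ℕ), hi⟩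
      exact ⟨x.1, ⟨x, hx, rfl⟩, u, rfl, ((hS x.1).mp x.2).symm⟩
    · rw [dif_neg hi, dif_pos hj]
      obtain ⟨x, hx⟩ := hBne ⟨(j : ℕ), hj⟩
      exact ⟨u, rfl, x.1, ⟨x, hx, rfl⟩, (hS x.1).mp x.2⟩
    · exact absurd (Fin.ext (by omega)) hij'

theorem K5helper : ∀ (n : ℕ) {V : Type u} [Fintype V] [DecidableEq V] (G : SimpleGraph V)
    [DecidableRel G.Adj], Fintype.card V ≤ n → 2 ≤ Fintype.card V →
    3 * Fintype.card V ≤ G.edgeFinset.card + 2 → HasMinor G (completeGraph (Fin 5)) := by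
  intro n
  induction n using Nat.strong_induction_on with
  | _ n IHn =>
  have inner : ∀ (E : ℕ) {V : Type u} [Fintype V] [DecidableEq V] (G : SimpleGraph V)
      [DecidableRel G.Adj], Fintype.card V ≤ n → G.edgeFinset.card ≤ E →
      2 ≤ Fintype.card V → 3 * Fintype.card V ≤ G.edgeFinset.card + 2 →
      HasMinor G (completeGraph (Fin 5)) := by
    intro E
    induction E with
    | zero =>
      intro V _ _ G _ hn hE hc hd
      omega
    | succ E ihE =>
      intro V _ _ G _ hn hE hc hd
      by_cases hEle : G.edgeFinset.card ≤ E
      · exact ihE G hn hEle hc hd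
      have hchoose := SimpleGraph.card_edgeFinset_le_card_choose_two (G := G)
      have hn7 : 7 ≤ Fintype.card V := by
        by_contra hlt
        push_neg at hlt
        have key : ∀ k < 7, 2 ≤ k → Nat.choose k 2 + 2 < 3 * k := by decide
        have := key (Fintype.card V) (by omega) hc
        omega
      by_cases hdel : 3 * Fintype.card V ≤ G.edgeFinset.card + 1
      · obtain ⟨ed, hed⟩ : G.edgeFinset.Nonempty := by
          rw [← Finset.card_pos]; omega
        haveI : DecidableRel (G.deleteEdges ({ed} : Finset (Sym2 V)) : SimpleGraph V).Adj :=
          fun a b => Classical.dec _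
        set G' := G.deleteEdges ({ed} : Finset (Sym2 V)) with hG'
        have hcard' : G'.edgeFinset.card = G.edgeFinset.card - 1 := by
          have : G'.edgeFinset = G.edgeFinset \ ({ed} : Finset (Sym2 V)) := by
            have := SimpleGraph.edgeFinset_deleteEdges (G := G) ({ed} : Finset (Sym2 V))
            convert this
          rw [this, Finset.card_sdiff_of_subset (by simpa using hed)]
          simp
        have := ihE G' hn (by omega) hc (by omega)
        exact hasMinor_trans (hasMinor_of_le (SimpleGraph.deleteEdges_le _)) this
      push_neg at hdel
      by_cases hv : ∃ v : V, G.degree v ≤ 3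
      · obtain ⟨v, hvdeg⟩ := hv
        set S : Set V := {x : V | x ≠ v} with hSdef
        haveI : DecidablePred (· ∈ S) := fun x => decidable_of_iff (x ≠ v) Iff.rfl
        have hcardS : Fintype.card ↥S = Fintype.card V - 1 := by
          rw [← card_ne_vtx (v := v)]
          exact Fintype.card_congr (Equiv.subtypeEquivRight (by intro x; simp [hSdef]))
        have heq3 : Finset.filter (fun e => ∀ x ∈ e, x ∈ S) G.edgeFinset
            = Finset.filter (fun e => ∀ x ∈ e, x ≠ v) G.edgeFinset := by
          apply Finset.filter_congr
          intro e _
          simp [hSdef]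
        have he' : (G.induce S).edgeFinset.card = G.edgeFinset.card - G.degree v := by
          rw [induce_edge_card G S, heq3, avoid_edge_card G v]
        have hrec := IHn (n-1) (by omega) (G.induce S) (by omega) (by omega) (by omega)
        exact hasMinor_trans (hasMinor_induce G S) hrec
      · push_neg at hv
        have hsum := G.sum_degrees_eq_twice_card_edges
        have hu5 : ∃ u, G.degree u ≤ 5 := by
          by_contra hall
          push_neg at hall
          have h6 : ∀ w ∈ Finset.univ, 6 ≤ G.degree w := by
            intro w _
            have h2 := hall w
            omega
          have hle := Finset.card_nsmul_le_sum Finset.univ (fun w => G.degree w) 6 h6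
          rw [Finset.card_univ, smul_eq_mul] at hle
          omega
        by_cases hedge : ∃ a b, G.Adj a b ∧ (G.neighborFinset a ∩ G.neighborFinset b).card ≤ 2
        · obtain ⟨a, b, hab, hcom⟩ := hedge
          have hcount := contract_edge_card G a b hab
          have hcard' : Fintype.card {x : V // x ≠ b} = Fintype.card V - 1 := card_ne_vtx b
          have hrec := IHn (n-1) (by omega) (contractG G a b) (by omega) (by omega) (by omega)
          exact hasMinor_trans (hasMinor_contract G hab) hrec
        · push_neg at hedge
          obtain ⟨u, hu5⟩ := hu5
          have hu4 : 4 ≤ G.degree u := hv u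
          haveI : DecidablePred (· ∈ (↑(G.neighborFinset u) : Set V)) := fun x =>
            inferInstanceAs (Decidable (x ∈ G.neighborFinset u))
          haveI hdr : DecidableRel (G.induce (↑(G.neighborFinset u) : Set V)).Adj :=
            fun p q => Classical.dec _
          have hS : ∀ x, x ∈ (↑(G.neighborFinset u) : Set V) ↔ G.Adj u x := by
            intro x
            rw [Finset.mem_coe, SimpleGraph.mem_neighborFinset]
          have hScard : Fintype.card ↥(↑(G.neighborFinset u) : Set V) = G.degree u := by
            rw [← SimpleGraph.card_neighborFinset_eq_degree]
            exact Fintype.card_coe _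
          have hHdeg : ∀ x : ↥(↑(G.neighborFinset u) : Set V),
              3 ≤ (G.induce (↑(G.neighborFinset u) : Set V)).degree x := by
            intro x
            have hadjux : G.Adj u x.1 := (hS x.1).mp x.2
            have hbij : (G.neighborFinset u ∩ G.neighborFinset x.1).card
                = (G.induce (↑(G.neighborFinset u) : Set V)).degree x := by
              apply Finset.card_bij (fun w hw =>
                (⟨w, Finset.mem_coe.mpr (Finset.mem_inter.mp hw).1⟩ :
                  ↥(↑(G.neighborFinset u) : Set V)))
              · intro w hw
                rw [SimpleGraph.mem_neighborFinset]
                exact ((G.mem_neighborFinset x.1 w).mp (Finset.mem_inter.mp hw).2)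
              · intro w1 h1 w2 h2 heq
                exact congrArg Subtype.val heq
              · intro z hz
                rw [SimpleGraph.mem_neighborFinset] at hz
                have hz1 : z.1 ∈ G.neighborFinset u := Finset.mem_coe.mp z.2
                refine ⟨z.1, ?_, Subtype.ext rfl⟩
                rw [Finset.mem_inter]
                exact ⟨hz1, (G.mem_neighborFinset x.1 z.1).mpr hz⟩
            have hcom := hedge u x.1 hadjux
            omega
          have hsumH := (G.induce (↑(G.neighborFinset u) : Set V)).sum_degrees_eq_twice_card_edges
          have hsumge : 3 * Fintype.card ↥(↑(G.neighborFinset u) : Set V)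
              ≤ 2 * (G.induce (↑(G.neighborFinset u) : Set V)).edgeFinset.card := by
            have hle := Finset.card_nsmul_le_sum Finset.univ
              (fun x => (G.induce (↑(G.neighborFinset u) : Set V)).degree x) 3
              (fun x _ => hHdeg x)
            rw [Finset.card_univ, smul_eq_mul] at hle
            omega
          have hk4 : HasMinor (G.induce (↑(G.neighborFinset u) : Set V))
              (completeGraph (Fin 4)) := by
            apply K4helper (Fintype.card ↥(↑(G.neighborFinset u) : Set V)) _ le_rfl
            · omega
            · omega
          exact k5_of_k4_nbhd G u _ hS hk4
  intro V _ _ G _ h1 h2 h3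
  exact inner G.edgeFinset.card G h1 le_rfl h2 h3

lemma density_bound {V : Type u} [Fintype V] [DecidableEq V] (G : SimpleGraph V)
    [DecidableRel G.Adj] (hG : ¬ HasMinor G (completeGraph (Fin 5))) (t : Finset V) :
    (G.edgeFinset.filter (fun e => ∀ x ∈ e, x ∈ t)).card ≤ 3 * t.card := by
  haveI : DecidablePred (· ∈ (↑t : Set V)) := fun x => inferInstanceAs (Decidable (x ∈ t))
  by_cases ht : 2 ≤ t.card
  · have hcard : Fintype.card ↥(↑t : Set V) = t.card := by
      rw [← Fintype.card_coe t]
      exact Fintype.card_congr (Equiv.subtypeEquivRight (fun x => Finset.mem_coe))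
    have hE := induce_edge_card G (↑t : Set V)
    have hfc : Finset.filter (fun e => ∀ x ∈ e, x ∈ (↑t : Set V)) G.edgeFinset
        = Finset.filter (fun e => ∀ x ∈ e, x ∈ t) G.edgeFinset := by
      apply Finset.filter_congr
      intro e _
      simp [Finset.mem_coe]
    by_contra hlt
    push_neg at hlt
    have hdense : 3 * Fintype.card ↥(↑t : Set V)
        ≤ (G.induce (↑t : Set V)).edgeFinset.card + 2 := by
      rw [hE, hfc, hcard]
      convert (Nat.le_add_right_of_le hlt.le : 3 * t.card ≤ _ + 2) using 3
      congr 1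
    exact hG (hasMinor_trans (hasMinor_induce G (↑t : Set V))
      (K5helper (Fintype.card ↥(↑t : Set V)) _ le_rfl (by omega) hdense))
  · have : G.edgeFinset.filter (fun e => ∀ x ∈ e, x ∈ t) = ∅ := by
      rw [Finset.eq_empty_iff_forall_notMem]
      intro e he
      rw [Finset.mem_filter] at he
      obtain ⟨he1, he2⟩ := he
      induction e using Sym2.ind with
      | _ a b =>
        rw [SimpleGraph.mem_edgeFinset, SimpleGraph.mem_edgeSet] at he1
        have hab : a ≠ b := he1.ne
        have ha : a ∈ t := he2 a (Sym2.mem_mk_left a b)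
        have hb : b ∈ t := he2 b (Sym2.mem_mk_right a b)
        have : 2 ≤ t.card := Finset.one_lt_card.mpr ⟨a, ha, b, hb, hab⟩
        omega
    have h0 := congrArg Finset.card this
    rw [Finset.card_empty] at h0
    convert Nat.zero_le (3 * t.card) using 1
    convert h0 using 2
    congr 1

theorem stmt7' {V : Type u} [Fintype V] (G : SimpleGraph V)
    (hK5 : ¬ HasMinor G (completeGraph (Fin 5))) :
    ∃ dir : V → V → Bool,
      (∀ u v, G.Adj u v ↔ (dir u v = true ∨ dir v u = true)) ∧
      (∀ u v, ¬(dir u v = true ∧ dir v u = true)) ∧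
      (∀ u, (Finset.univ.filter fun v => dir u v = true).card ≤ 3) := by
  classical
  have hdens := density_bound G hK5
  -- Hall family
  set ι := {e : Sym2 V // e ∈ G.edgeFinset} with hι
  set t : ι → Finset (V × Fin 3) :=
    fun e => (Finset.univ.filter (· ∈ e.1)) ×ˢ Finset.univ with ht
  have hall : ∀ s : Finset ι, s.card ≤ (s.biUnion t).card := by
    intro s
    set T : Finset V := s.biUnion (fun e => Finset.univ.filter (· ∈ e.1)) with hT
    have hprod : s.biUnion t = T ×ˢ (Finset.univ : Finset (Fin 3)) := by
      ext ⟨w, i⟩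
      simp only [Finset.mem_biUnion, Finset.mem_product, Finset.mem_filter, Finset.mem_univ,
        true_and, and_true, ht, hT]
    have hinj : s.card ≤ (G.edgeFinset.filter (fun e => ∀ x ∈ e, x ∈ T)).card := by
      apply Finset.card_le_card_of_injOn Subtype.val
      · intro e he
        rw [Finset.mem_coe, Finset.mem_filter]
        refine ⟨e.2, ?_⟩
        intro x hx
        rw [hT, Finset.mem_biUnion]
        exact ⟨e, he, by simp [hx]⟩
      · intro e1 _ e2 _ h
        exact Subtype.ext h
    have hcardT := hdens T
    rw [hprod, Finset.card_product, Finset.card_univ, Fintype.card_fin]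
    omega
  obtain ⟨f, hfinj, hfmem⟩ := (Finset.all_card_le_biUnion_card_iff_exists_injective t).mp hall
  have hf1 : ∀ e : ι, (f e).1 ∈ e.1 := by
    intro e
    have := hfmem e
    rw [ht, Finset.mem_product, Finset.mem_filter] at this
    exact this.1.2
  refine ⟨fun a b => if h : G.Adj a b then
      (decide ((f ⟨s(a,b), by rwa [SimpleGraph.mem_edgeFinset, SimpleGraph.mem_edgeSet]⟩).1 = a))
      else false, ?_, ?_, ?_⟩
  · intro a b
    constructor
    · intro h
      have hmem : s(a,b) ∈ G.edgeFinset := by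
        rwa [SimpleGraph.mem_edgeFinset, SimpleGraph.mem_edgeSet]
      have hmem' : s(b,a) ∈ G.edgeFinset := by
        rwa [Sym2.eq_swap]
      have hee : (⟨s(b,a), hmem'⟩ : ι) = ⟨s(a,b), hmem⟩ := Subtype.ext Sym2.eq_swap
      have := hf1 ⟨s(a,b), hmem⟩
      rw [Sym2.mem_iff] at this
      rcases this with h1 | h1
      · left
        beta_reduce
        rw [dif_pos h]
        simpa using h1
      · right
        beta_reduce
        rw [dif_pos h.symm, hee]
        simpa using h1
    · intro h
      rcases h with h | h
      · by_cases hadj : G.Adj a b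
        · exact hadj
        · beta_reduce at h
          rw [dif_neg hadj] at h
          exact absurd h (by simp)
      · by_cases hadj : G.Adj b a
        · exact hadj.symm
        · beta_reduce at h
          rw [dif_neg hadj] at h
          exact absurd h (by simp)
  · intro a b hcon
    obtain ⟨h1, h2⟩ := hcon
    beta_reduce at h1 h2
    by_cases hadj : G.Adj a b
    · have hadj' : G.Adj b a := hadj.symm
      rw [dif_pos hadj] at h1
      rw [dif_pos hadj'] at h2
      have hmem : s(a,b) ∈ G.edgeFinset := by
        rwa [SimpleGraph.mem_edgeFinset, SimpleGraph.mem_edgeSet]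
      have hmem' : s(b,a) ∈ G.edgeFinset := by
        rwa [Sym2.eq_swap]
      have hee : (⟨s(b,a), hmem'⟩ : ι) = ⟨s(a,b), hmem⟩ := Subtype.ext Sym2.eq_swap
      rw [decide_eq_true_iff] at h1 h2
      rw [hee] at h2
      exact hadj.ne (h1.symm.trans h2)
    · rw [dif_neg hadj] at h1
      exact absurd h1 (by simp)
  · intro a
    set g : V → Fin 3 := fun b => if h : G.Adj a b then
        (f ⟨s(a,b), by rwa [SimpleGraph.mem_edgeFinset, SimpleGraph.mem_edgeSet]⟩).2
        else 0 with hg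
    have key := Finset.card_le_card_of_injOn
      (s := Finset.univ.filter (fun b => (if h : G.Adj a b then
        (decide ((f ⟨s(a,b), by rwa [SimpleGraph.mem_edgeFinset, SimpleGraph.mem_edgeSet]⟩).1 = a))
        else false) = true))
      (t := (Finset.univ : Finset (Fin 3))) g
      (fun x _ => Finset.mem_univ _) ?_
    · simpa using key
    · intro b1 hb1 b2 hb2 heq
      rw [Finset.coe_filter, Set.mem_setOf_eq] at hb1 hb2
      obtain ⟨-, hd1⟩ := hb1
      obtain ⟨-, hd2⟩ := hb2
      beta_reduce at hd1 hd2
      by_cases ha1 : G.Adj a b1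
      · by_cases ha2 : G.Adj a b2
        · rw [dif_pos ha1] at hd1
          rw [dif_pos ha2] at hd2
          rw [decide_eq_true_iff] at hd1 hd2
          rw [hg] at heq
          beta_reduce at heq
          simp only [dif_pos ha1, dif_pos ha2] at heq
          have hfeq : f ⟨s(a,b1), _⟩ = f ⟨s(a,b2), _⟩ := Prod.ext (hd1.trans hd2.symm) heq
          have := hfinj hfeq
          have hs : s(a, b1) = s(a, b2) := congrArg Subtype.val this
          rw [Sym2.eq_iff] at hs
          rcases hs with ⟨-, h⟩ | ⟨h1', h2'⟩
          · exact h
          · exact absurd h1' ha2.ne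
        · rw [dif_neg ha2] at hd2
          exact absurd hd2 (by simp)
      · rw [dif_neg ha1] at hd1
        exact absurd hd1 (by simp)

theorem stmt7 {V : Type*} [Fintype V] (G : SimpleGraph V) (hG : IsPlanar G) :
    ∃ o : GOrientation G, ∀ u, o.outDeg u ≤ 3 := by
  obtain ⟨dir, h1, h2, h3⟩ := stmt7' G hG.1
  exact ⟨⟨dir, h1, h2⟩, h3⟩
end

section
/- Every finite tree T satisfies χ⃗(T) ≤ 4. -/
open SimpleGraph Finset

namespace TreePON

attribute [local instance] Classical.propDecidable

variable {V : Type*} {T : SimpleGraph V}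

noncomputable def pathTo (hT : T.IsTree) (r v : V) : T.Walk v r :=
  (hT.existsUnique_path v r).exists.choose

lemma pathTo_isPath (hT : T.IsTree) (r v : V) : (pathTo hT r v).IsPath :=
  (hT.existsUnique_path v r).exists.choose_spec

lemma pathTo_unique (hT : T.IsTree) {r v : V} (q : T.Walk v r) (hq : q.IsPath) :
    q = pathTo hT r v :=
  ((hT.existsUnique_path v r).unique hq (pathTo_isPath hT r v))

noncomputable def dep (hT : T.IsTree) (r v : V) : ℕ := (pathTo hT r v).length

lemma pathTo_self (hT : T.IsTree) (r : V) : pathTo hT r r = Walk.nil :=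
  (pathTo_unique hT Walk.nil (Walk.IsPath.nil)).symm

lemma dep_self (hT : T.IsTree) (r : V) : dep hT r r = 0 := by
  simp [dep, pathTo_self]

lemma pathTo_not_nil (hT : T.IsTree) {r v : V} (h : v ≠ r) : ¬ (pathTo hT r v).Nil := by
  intro hn
  exact h (Walk.Nil.eq hn)

noncomputable def par (hT : T.IsTree) (r v : V) : V :=
  if v = r then r else (pathTo hT r v).getVert 1

lemma adj_par (hT : T.IsTree) {r v : V} (h : v ≠ r) : T.Adj v (par hT r v) := by
  rw [par, if_neg h]
  exact (pathTo hT r v).adj_snd (pathTo_not_nil hT h)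

lemma tail_eq (hT : T.IsTree) {r v : V} (h : v ≠ r) :
    (pathTo hT r v).tail = pathTo hT r ((pathTo hT r v).getVert 1) := by
  apply pathTo_unique
  have hp := pathTo_isPath hT r v
  rw [← Walk.cons_tail_eq (pathTo hT r v) (pathTo_not_nil hT h)] at hp
  exact (Walk.cons_isPath_iff _ _).1 hp |>.1

lemma support_eq (hT : T.IsTree) {r v : V} (h : v ≠ r) :
    (pathTo hT r v).support = v :: (pathTo hT r (par hT r v)).support := by
  conv_lhs => rw [← Walk.cons_support_tail (p := pathTo hT r v) (pathTo_not_nil hT h)]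
  rw [tail_eq hT h, par, if_neg h]

lemma dep_par (hT : T.IsTree) {r v : V} (h : v ≠ r) :
    dep hT r (par hT r v) + 1 = dep hT r v := by
  unfold dep
  rw [par, if_neg h, ← tail_eq hT h]
  exact Walk.length_tail_add_one (pathTo_not_nil hT h)


lemma dropUntil_eq (hT : T.IsTree) {r x v : V} (hx : v ∈ (pathTo hT r x).support) :
    (pathTo hT r x).dropUntil v hx = pathTo hT r v :=
  pathTo_unique hT _ ((pathTo_isPath hT r x).dropUntil hx)

lemma dep_le_of_mem (hT : T.IsTree) {r x v : V} (hx : v ∈ (pathTo hT r x).support) :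
    dep hT r v ≤ dep hT r x := by
  rw [dep, ← dropUntil_eq hT hx]
  exact Walk.length_dropUntil_le _ hx

lemma support_subset_of_mem (hT : T.IsTree) {r x v : V} (hx : v ∈ (pathTo hT r x).support) :
    (pathTo hT r v).support ⊆ (pathTo hT r x).support := by
  rw [← dropUntil_eq hT hx]
  exact Walk.support_dropUntil_subset _ hx

lemma root_mem (hT : T.IsTree) (r x : V) : r ∈ (pathTo hT r x).support :=
  Walk.end_mem_support _

lemma self_mem (hT : T.IsTree) (r x : V) : x ∈ (pathTo hT r x).support :=
  Walk.start_mem_support _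

lemma mem_of_mem_r (hT : T.IsTree) {r v : V} (hv : v ∈ (pathTo hT r r).support) : v = r := by
  rw [pathTo_self] at hv; simpa using hv

/-- If `v ∉ support (pathTo u)` and `Adj u v` then `v ≠ r` and `par v = u`. -/
lemma par_of_not_mem (hT : T.IsTree) {r u v : V} (hadj : T.Adj u v)
    (hv : v ∉ (pathTo hT r u).support) : v ≠ r ∧ par hT r v = u := by
  have hpath : (Walk.cons hadj.symm (pathTo hT r u)).IsPath := by
    rw [Walk.cons_isPath_iff]
    exact ⟨pathTo_isPath hT r u, hv⟩
  have heq := pathTo_unique hT _ hpath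
  have hvr : v ≠ r := by
    intro h
    subst h
    rw [pathTo_self] at heq
    simpa using congrArg Walk.length heq
  refine ⟨hvr, ?_⟩
  rw [par, if_neg hvr, ← heq]
  simp [Walk.getVert_cons_succ]

lemma adj_cases (hT : T.IsTree) {r u v : V} (hadj : T.Adj u v) :
    (u ≠ r ∧ par hT r u = v) ∨ (v ≠ r ∧ par hT r v = u) := by
  by_cases hv : v ∈ (pathTo hT r u).support
  · left
    have hu : u ∉ (pathTo hT r v).support := by
      intro hu
      have hnd := (pathTo_isPath hT r u).support_nodup
      rw [← Walk.take_spec (pathTo hT r u) hv, Walk.support_append] at hnd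
      have h1 : u ∈ ((pathTo hT r u).takeUntil v hv).support := Walk.start_mem_support _
      have h2 : u ∈ ((pathTo hT r u).dropUntil v hv).support.tail := by
        rw [dropUntil_eq hT hv]
        have hc := (pathTo hT r v).support_eq_cons
        rw [hc, List.mem_cons] at hu
        rcases hu with h | h
        · exact absurd h hadj.ne
        · exact h
      exact (List.disjoint_of_nodup_append hnd) h1 h2
    exact par_of_not_mem hT hadj.symm hu
  · right
    exact par_of_not_mem hT hadj hv

lemma par_ne (hT : T.IsTree) {r v : V} (h : v ≠ r) : par hT r v ≠ v := by
  intro he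
  have := dep_par hT h
  rw [he] at this
  omega

lemma no_mutual (hT : T.IsTree) {r u v : V} (hu : u ≠ r) (hv : v ≠ r)
    (h1 : par hT r u = v) (h2 : par hT r v = u) : False := by
  have d1 := dep_par hT hu
  have d2 := dep_par hT hv
  rw [h1] at d1; rw [h2] at d2
  omega

lemma child_ne_r_mem (hT : T.IsTree) {r c v : V} (hc : c ≠ r) (hpc : par hT r c = v) :
    v ∈ (pathTo hT r c).support := by
  rw [support_eq hT hc, hpc]
  exact List.mem_cons_of_mem _ (self_mem hT r v)

lemma dep_child (hT : T.IsTree) {r c v : V} (hc : c ≠ r) (hpc : par hT r c = v) :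
    dep hT r c = dep hT r v + 1 := by
  have := dep_par hT hc; rw [hpc] at this; omega

/-- Subtrees of distinct children of `v` are disjoint. -/
lemma subtree_disjoint (hT : T.IsTree) {r v c₁ c₂ : V}
    (h1 : c₁ ≠ r) (hp1 : par hT r c₁ = v) (h2 : c₂ ≠ r) (hp2 : par hT r c₂ = v)
    (hne : c₁ ≠ c₂) :
    ∀ x, c₁ ∈ (pathTo hT r x).support → c₂ ∈ (pathTo hT r x).support → False := by
  suffices H : ∀ n x, dep hT r x = n → c₁ ∈ (pathTo hT r x).support →
      c₂ ∈ (pathTo hT r x).support → False by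
    intro x; exact H (dep hT r x) x rfl
  intro n
  induction n using Nat.strong_induction_on with
  | _ n IH =>
    intro x hdx hm1 hm2
    by_cases hx1 : x = c₁
    · subst hx1
      rw [support_eq hT h1, hp1, List.mem_cons] at hm2
      rcases hm2 with h | h
      · exact hne h.symm
      · have := dep_le_of_mem hT h
        have := dep_child hT h2 hp2
        omega
    by_cases hx2 : x = c₂
    · subst hx2
      rw [support_eq hT h2, hp2, List.mem_cons] at hm1
      rcases hm1 with h | h
      · exact hne h
      · have := dep_le_of_mem hT h
        have := dep_child hT h1 hp1
        omega
    have hxr : x ≠ r := by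
      intro he; subst he
      exact h1 (mem_of_mem_r hT hm1)
    rw [support_eq hT hxr, List.mem_cons] at hm1 hm2
    rcases hm1 with h | hm1'
    · exact hx1 h.symm
    rcases hm2 with h | hm2'
    · exact hx2 h.symm
    have hd := dep_par hT hxr
    exact IH (dep hT r (par hT r x)) (by omega) _ rfl hm1' hm2'

/-- Every strict descendant of `v` lies in the subtree of some child of `v`. -/
lemma subtree_partition (hT : T.IsTree) {r v : V} :
    ∀ x, v ∈ (pathTo hT r x).support → x ≠ v →
      ∃ c, c ≠ r ∧ par hT r c = v ∧ c ∈ (pathTo hT r x).support := by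
  suffices H : ∀ n x, dep hT r x = n → v ∈ (pathTo hT r x).support → x ≠ v →
      ∃ c, c ≠ r ∧ par hT r c = v ∧ c ∈ (pathTo hT r x).support by
    intro x; exact H (dep hT r x) x rfl
  intro n
  induction n using Nat.strong_induction_on with
  | _ n IH =>
    intro x hdx hm hne
    have hxr : x ≠ r := by
      intro he; subst he
      exact hne (mem_of_mem_r hT hm).symm
    by_cases hpx : par hT r x = v
    · exact ⟨x, hxr, hpx, self_mem hT r x⟩
    · rw [support_eq hT hxr, List.mem_cons] at hm
      rcases hm with h | hm'
      · exact absurd h.symm hne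
      have hd := dep_par hT hxr
      have hpv : par hT r x ≠ v := hpx
      obtain ⟨c, hc1, hc2, hc3⟩ := IH (dep hT r (par hT r x)) (by omega) _ rfl hm' hpv
      exact ⟨c, hc1, hc2, by
        rw [support_eq hT hxr, List.mem_cons]; exact Or.inr hc3⟩

section FT
variable [Fintype V]

noncomputable def childs (hT : T.IsTree) (r v : V) : Finset V :=
  univ.filter (fun c => c ≠ r ∧ par hT r c = v)

lemma mem_childs (hT : T.IsTree) {r v c : V} :
    c ∈ childs hT r v ↔ c ≠ r ∧ par hT r c = v := by
  simp [childs]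

/-- The outdegree of `v` induced by the flag assignment `S` (flag true = edge to parent
oriented away from `v`). -/
noncomputable def od (hT : T.IsTree) (r : V) (S : V → Bool) (v : V) : ℕ :=
  (if v ≠ r ∧ S v = true then 1 else 0) +
    ((childs hT r v).filter (fun c => S c = false)).card

lemma od_congr (hT : T.IsTree) {r : V} {S S' : V → Bool} {v : V}
    (h1 : S v = S' v) (h2 : ∀ c ∈ childs hT r v, S c = S' c) :
    od hT r S v = od hT r S' v := by
  unfold od
  rw [h1, Finset.filter_congr (fun c hc => by rw [h2 c hc])]

lemma od_pos (hT : T.IsTree) {r : V} {S : V → Bool} {v : V} (hv : v ≠ r)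
    (hS : S v = true) : 1 ≤ od hT r S v := by
  unfold od
  rw [if_pos ⟨hv, hS⟩]
  omega

/-- `Ach v m f`: there is a flag assignment with flag `m` at `v`, outdegree `f` at `v`,
and all outdegrees in the subtree of `v` at most 4 and proper within the subtree. -/
def Ach (hT : T.IsTree) (r v : V) (m : Bool) (f : ℕ) : Prop :=
  ∃ S : V → Bool, S v = m ∧ od hT r S v = f ∧
    ∀ w, v ∈ (pathTo hT r w).support →
      od hT r S w ≤ 4 ∧ (w ≠ v → od hT r S w ≠ od hT r S (par hT r w))

lemma Ach.le_four (hT : T.IsTree) {r v : V} {m : Bool} {f : ℕ}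
    (h : Ach hT r v m f) : f ≤ 4 := by
  obtain ⟨S, _, hf, hinv⟩ := h
  rw [← hf]
  exact (hinv v (self_mem hT r v)).1

lemma Ach.pos (hT : T.IsTree) {r v : V} {f : ℕ} (hv : v ≠ r)
    (h : Ach hT r v true f) : 1 ≤ f := by
  obtain ⟨S, hm, hf, _⟩ := h
  rw [← hf]
  exact od_pos hT hv hm

end FT

section FT2
variable [Fintype V]

lemma assemble (hT : T.IsTree) {r v : V} (m : Bool) (D : Finset V)
    (hD : D ⊆ childs hT r v)
    (ht4 : (if v ≠ r ∧ m = true then 1 else 0) + D.card ≤ 4)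
    (F : V → ℕ)
    (hdown : ∀ c ∈ D, Ach hT r c false (F c))
    (hup : ∀ c ∈ childs hT r v, c ∉ D → Ach hT r c true (F c))
    (hne : ∀ c ∈ childs hT r v, F c ≠ (if v ≠ r ∧ m = true then 1 else 0) + D.card) :
    Ach hT r v m ((if v ≠ r ∧ m = true then 1 else 0) + D.card) := by
  set t := (if v ≠ r ∧ m = true then 1 else 0) + D.card with hts
  have H : ∀ c : V, ∃ S : V → Bool, c ∈ childs hT r v →
      (S c = (if c ∈ D then false else true) ∧ od hT r S c = F c ∧
        ∀ w, c ∈ (pathTo hT r w).support →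
          od hT r S w ≤ 4 ∧ (w ≠ c → od hT r S w ≠ od hT r S (par hT r w))) := by
    intro c
    by_cases hc : c ∈ childs hT r v
    · by_cases hcD : c ∈ D
      · obtain ⟨S, h1, h2, h3⟩ := hdown c hcD
        exact ⟨S, fun _ => ⟨by rw [h1, if_pos hcD], h2, h3⟩⟩
      · obtain ⟨S, h1, h2, h3⟩ := hup c hc hcD
        exact ⟨S, fun _ => ⟨by rw [h1, if_neg hcD], h2, h3⟩⟩
    · exact ⟨fun _ => false, fun h => absurd h hc⟩
  choose Sc hSc using H
  classical
  set S : V → Bool := fun w => if w = v then m else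
    (if h : ∃ c, c ∈ childs hT r v ∧ c ∈ (pathTo hT r w).support
      then Sc h.choose w else false) with hSdef
  have hnv : ∀ c ∈ childs hT r v, ∀ w, c ∈ (pathTo hT r w).support → w ≠ v := by
    intro c hc w hm he
    subst he
    have h1 := dep_le_of_mem hT hm
    rw [mem_childs] at hc
    have h2 := dep_child hT hc.1 hc.2
    omega
  have hSval : ∀ c ∈ childs hT r v, ∀ w, c ∈ (pathTo hT r w).support → S w = Sc c w := by
    intro c hc w hm
    have hwv : w ≠ v := hnv c hc w hm
    have hex : ∃ c', c' ∈ childs hT r v ∧ c' ∈ (pathTo hT r w).support := ⟨c, hc, hm⟩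
    rw [hSdef]
    simp only [if_neg hwv, dif_pos hex]
    have hspec := hex.choose_spec
    have : hex.choose = c := by
      by_contra hne'
      rw [mem_childs] at hspec hc
      exact subtree_disjoint hT hspec.1.1 hspec.1.2 hc.1 hc.2 hne' w hspec.2 hm
    rw [this]
  have hSv : S v = m := by rw [hSdef]; simp
  have hSchild : ∀ c ∈ childs hT r v, S c = (if c ∈ D then false else true) := by
    intro c hc
    rw [hSval c hc c (self_mem hT r c)]
    exact (hSc c hc).1
  have hodv : od hT r S v = t := by
    unfold od
    have hfe : (childs hT r v).filter (fun c => S c = false) = D := by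
      ext c
      simp only [Finset.mem_filter]
      constructor
      · rintro ⟨hc, hs⟩
        rw [hSchild c hc] at hs
        by_contra hcD
        rw [if_neg hcD] at hs
        exact absurd hs (by simp)
      · intro hcD
        refine ⟨hD hcD, ?_⟩
        rw [hSchild c (hD hcD), if_pos hcD]
    rw [hfe, hSv, hts]
  refine ⟨S, hSv, hodv, ?_⟩
  intro w hvw
  by_cases hwv : w = v
  · subst hwv
    exact ⟨by rw [hodv]; exact ht4, fun h => absurd rfl h⟩
  · obtain ⟨c, hcr, hcp, hcw⟩ := subtree_partition hT w hvw hwv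
    have hc : c ∈ childs hT r v := mem_childs hT |>.2 ⟨hcr, hcp⟩
    have hagree : ∀ x, c ∈ (pathTo hT r x).support → od hT r S x = od hT r (Sc c) x := by
      intro x hx
      refine od_congr hT (hSval c hc x hx) ?_
      intro y hy
      rw [mem_childs] at hy
      apply hSval c hc
      rw [support_eq hT hy.1, hy.2]
      exact List.mem_cons_of_mem _ hx
    have hinvc := (hSc c hc).2.2 w hcw
    refine ⟨by rw [hagree w hcw]; exact hinvc.1, fun _ => ?_⟩
    by_cases hwc : w = c
    · subst hwc
      rw [hagree w (self_mem hT r w), (hSc w hc).2.1, hcp, hodv]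
      exact hne w hc
    · have hwr : w ≠ r := by
        intro he; subst he
        exact hcr (mem_of_mem_r hT hcw)
      have hcpw : c ∈ (pathTo hT r (par hT r w)).support := by
        have := hcw
        rw [support_eq hT hwr, List.mem_cons] at this
        rcases this with h | h
        · exact absurd h.symm hwc
        · exact h
      rw [hagree w hcw, hagree _ hcpw]
      exact hinvc.2 hwc

end FT2

section FT3
variable [Fintype V]

/-- `c` can point up to its parent with an outdegree avoiding `t`. -/
def UA (hT : T.IsTree) (r c : V) (t : ℕ) : Prop :=
  ∃ f, f ≠ t ∧ Ach hT r c true f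

lemma build0 (hT : T.IsTree) {r : V} (v : V)
    (hup : ∀ c ∈ childs hT r v, UA hT r c 0) : Ach hT r v false 0 := by
  have hFex : ∀ c : V, ∃ f, c ∈ childs hT r v → (f ≠ 0 ∧ Ach hT r c true f) := by
    intro c
    by_cases hc : c ∈ childs hT r v
    · obtain ⟨f, hf1, hf2⟩ := hup c hc
      exact ⟨f, fun _ => ⟨hf1, hf2⟩⟩
    · exact ⟨0, fun h => absurd h hc⟩
  choose F hF using hFex
  have := assemble hT (v := v) false ∅ (Finset.empty_subset _) (by simp) F
    (by simp) (fun c hc _ => (hF c hc).2) (fun c hc => by simpa using (hF c hc).1)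
  simpa using this

lemma build (hT : T.IsTree) {r v : V} (hv : v ≠ r) (D : Finset V)
    (hD : D ⊆ childs hT r v) (t : ℕ) (hts : t = 1 + D.card) (ht4 : t ≤ 4)
    (hdown : ∀ c ∈ D, Ach hT r c false 0) (h0 : (0:ℕ) ≠ t)
    (hup : ∀ c ∈ childs hT r v, c ∉ D → UA hT r c t) : Ach hT r v true t := by
  have hFex : ∀ c : V, ∃ f, c ∈ childs hT r v →
      ((if c ∈ D then f = 0 ∧ Ach hT r c false f else Ach hT r c true f) ∧ f ≠ t) := by
    intro c
    by_cases hc : c ∈ childs hT r v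
    · by_cases hcD : c ∈ D
      · exact ⟨0, fun _ => ⟨by rw [if_pos hcD]; exact ⟨rfl, hdown c hcD⟩, h0⟩⟩
      · obtain ⟨f, hf1, hf2⟩ := hup c hc hcD
        exact ⟨f, fun _ => ⟨by rw [if_neg hcD]; exact hf2, hf1⟩⟩
    · exact ⟨0, fun h => absurd h hc⟩
  choose F hF using hFex
  have key := assemble hT (v := v) true D hD
    (by rw [if_pos ⟨hv, rfl⟩]; omega) F
    (fun c hcD => by
      have := (hF c (hD hcD)).1
      rw [if_pos hcD] at this
      exact this.2)
    (fun c hc hcD => by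
      have := (hF c hc).1
      rw [if_neg hcD] at this
      exact this)
    (fun c hc => by
      rw [if_pos ⟨hv, rfl⟩, ← hts]
      exact (hF c hc).2)
  rw [if_pos ⟨hv, rfl⟩, ← hts] at key
  exact key

/-- The inductive invariant for non-root vertices. -/
def Inv (hT : T.IsTree) (r v : V) : Prop :=
  Ach hT r v false 0 ∧
    ((∃ f, 1 ≤ f ∧ f ≤ 2 ∧ Ach hT r v true f) ∨
      (Ach hT r v true 3 ∧ Ach hT r v true 4))

lemma Inv.ua0 (hT : T.IsTree) {r c : V} (h : Inv hT r c) : UA hT r c 0 := by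
  rcases h.2 with ⟨f, h1, _, h3⟩ | ⟨h3, _⟩
  · exact ⟨f, by omega, h3⟩
  · exact ⟨3, by omega, h3⟩

lemma Inv.ua3 (hT : T.IsTree) {r c : V} (h : Inv hT r c) : UA hT r c 3 := by
  rcases h.2 with ⟨f, _, h2, h3⟩ | ⟨_, h4⟩
  · exact ⟨f, by omega, h3⟩
  · exact ⟨4, by omega, h4⟩

lemma Inv.ua4 (hT : T.IsTree) {r c : V} (h : Inv hT r c) : UA hT r c 4 := by
  rcases h.2 with ⟨f, _, h2, h3⟩ | ⟨h3, _⟩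
  · exact ⟨f, by omega, h3⟩
  · exact ⟨3, by omega, h3⟩

lemma Inv.ua12 (hT : T.IsTree) {r c : V} (h : Inv hT r c) :
    UA hT r c 1 ∨ UA hT r c 2 := by
  rcases h.2 with ⟨f, h1, h2, h3⟩ | ⟨h3, _⟩
  · by_cases hf : f = 1
    · right; exact ⟨f, by omega, h3⟩
    · left; exact ⟨f, hf, h3⟩
  · left; exact ⟨3, by omega, h3⟩

end FT3

section FT4
variable [Fintype V]

lemma dep_lt_card (hT : T.IsTree) (r v : V) : dep hT r v < Fintype.card V :=
  (pathTo_isPath hT r v).length_lt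

lemma inv_all (hT : T.IsTree) (r : V) : ∀ v, v ≠ r → Inv hT r v := by
  suffices H : ∀ n v, Fintype.card V - dep hT r v = n → v ≠ r → Inv hT r v by
    intro v; exact H _ v rfl
  intro n
  induction n using Nat.strong_induction_on with
  | _ n IH =>
    intro v hdv hvr
    have hdlt := dep_lt_card hT r v
    have IHc : ∀ c ∈ childs hT r v, Inv hT r c := by
      intro c hc
      rw [mem_childs] at hc
      have hdc := dep_child hT hc.1 hc.2
      exact IH (Fintype.card V - dep hT r c) (by omega) c rfl hc.1
    constructor
    · exact build0 hT v (fun c hc => (IHc c hc).ua0 hT)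
    · by_cases hA : ∀ c ∈ childs hT r v, UA hT r c 1
      · left
        refine ⟨1, le_refl _, by omega, ?_⟩
        have := build hT hvr ∅ (Finset.empty_subset _) 1 (by simp) (by omega)
          (by simp) (by omega) (fun c hc _ => hA c hc)
        exact this
      · push_neg at hA
        obtain ⟨cs, hcs, hcs1⟩ := hA
        have hcs2 : UA hT r cs 2 := ((IHc cs hcs).ua12 hT).resolve_left hcs1
        set M := (childs hT r v).filter (fun c => ¬ UA hT r c 2) with hM
        have hMsub : M ⊆ childs hT r v := Finset.filter_subset _ _
        have hcsM : cs ∉ M := by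
          rw [hM, Finset.mem_filter]
          push_neg
          intro _; exact hcs2
        by_cases hMc : M.card ≤ 1
        · left
          refine ⟨2, by omega, le_refl _, ?_⟩
          set D := if M = ∅ then ({cs} : Finset V) else M with hD
          have hDsub : D ⊆ childs hT r v := by
            rw [hD]; split
            · intro x hx
              rw [Finset.mem_singleton] at hx
              subst hx; exact hcs
            · exact hMsub
          have hDcard : D.card = 1 := by
            rw [hD]; split
            · simp
            · have : M.Nonempty := Finset.nonempty_iff_ne_empty.2 (by assumption)
              have := Finset.card_pos.2 this
              omega
          have := build hT hvr D hDsub 2 (by omega) (by omega)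
            (fun c hc => (IHc c (hDsub hc)).1) (by omega)
            (fun c hc hcD => by
              by_contra hua
              have hcM : c ∈ M := by
                rw [hM, Finset.mem_filter]; exact ⟨hc, hua⟩
              rw [hD] at hcD
              by_cases hMe : M = ∅
              · rw [hMe] at hcM; simp at hcM
              · rw [if_neg hMe] at hcD; exact hcD hcM)
          exact this
        · right
          push_neg at hMc
          obtain ⟨c₂, hc₂, c₃, hc₃, hne23⟩ := Finset.one_lt_card.1 hMc
          have hM2 : ∀ c ∈ M, Ach hT r c false 0 := fun c hc => (IHc c (hMsub hc)).1
          constructor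
          · -- t = 3, D = {c₂, c₃}
            have hDsub : ({c₂, c₃} : Finset V) ⊆ childs hT r v := by
              intro x hx
              rw [Finset.mem_insert, Finset.mem_singleton] at hx
              rcases hx with h | h <;> subst h
              · exact hMsub hc₂
              · exact hMsub hc₃
            have hDcard : ({c₂, c₃} : Finset V).card = 2 := by
              rw [Finset.card_insert_of_notMem (by simpa using hne23), Finset.card_singleton]
            exact build hT hvr _ hDsub 3 (by omega) (by omega)
              (fun c hc => by
                rw [Finset.mem_insert, Finset.mem_singleton] at hc
                rcases hc with h | h <;> subst h
                · exact hM2 _ hc₂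
                · exact hM2 _ hc₃)
              (by omega)
              (fun c hc _ => (IHc c hc).ua3 hT)
          · -- t = 4, D = {cs, c₂, c₃}
            have hcs2' : cs ≠ c₂ := fun h => hcsM (h ▸ hc₂)
            have hcs3' : cs ≠ c₃ := fun h => hcsM (h ▸ hc₃)
            have hDsub : ({cs, c₂, c₃} : Finset V) ⊆ childs hT r v := by
              intro x hx
              rw [Finset.mem_insert, Finset.mem_insert, Finset.mem_singleton] at hx
              rcases hx with h | h | h <;> subst h
              · exact hcs
              · exact hMsub hc₂
              · exact hMsub hc₃
            have hDcard : ({cs, c₂, c₃} : Finset V).card = 3 := by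
              rw [Finset.card_insert_of_notMem (by simp [hcs2', hcs3']),
                Finset.card_insert_of_notMem (by simpa using hne23), Finset.card_singleton]
            exact build hT hvr _ hDsub 4 (by omega) (by omega)
              (fun c hc => by
                rw [Finset.mem_insert, Finset.mem_insert, Finset.mem_singleton] at hc
                rcases hc with h | h | h <;> subst h
                · exact (IHc _ hcs).1
                · exact hM2 _ hc₂
                · exact hM2 _ hc₃)
              (by omega)
              (fun c hc _ => (IHc c hc).ua4 hT)

end FT4

section FT5
variable [Fintype V]

lemma root_good (hT : T.IsTree) (r : V) :
    ∃ S : V → Bool, ∀ w, od hT r S w ≤ 4 ∧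
      (w ≠ r → od hT r S w ≠ od hT r S (par hT r w)) := by
  obtain ⟨S, _, _, hinv⟩ := build0 hT r
    (fun c hc => ((inv_all hT r c ((mem_childs hT).1 hc).1).ua0 hT))
  exact ⟨S, fun w => hinv w (root_mem hT r w)⟩

end FT5
end TreePON


open TreePON in
theorem tree_proper_orientation {V : Type*} [Fintype V] (T : SimpleGraph V) (hT : T.IsTree) :
    ∃ o : GOrientation T, o.IsProper ∧ ∀ u, o.outDeg u ≤ 4 := by
  classical
  have hne : Nonempty V := hT.isConnected.nonempty
  obtain ⟨r⟩ := hne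
  obtain ⟨S, hS⟩ := root_good hT r
  set P1 : V → V → Prop := fun u x => u ≠ r ∧ par hT r u = x ∧ S u = true with hP1
  set P2 : V → V → Prop := fun u x => x ≠ r ∧ par hT r x = u ∧ S x = false with hP2
  have hexcl2 : ∀ u x, P1 u x → P1 x u → False := by
    rintro u x ⟨hur, hpu, _⟩ ⟨hxr, hpx, _⟩
    by_cases he : u = x
    · subst he; exact par_ne hT hur hpu
    · exact no_mutual hT hur hxr hpu hpx
  have hexcl3 : ∀ u x, P2 u x → P2 x u → False := by
    rintro u x ⟨hxr, hpx, _⟩ ⟨hur, hpu, _⟩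
    by_cases he : u = x
    · subst he; exact par_ne hT hur hpu
    · exact no_mutual hT hur hxr hpu hpx
  have hdisj : ∀ u, Disjoint (univ.filter fun x => P1 u x) (univ.filter fun x => P2 u x) := by
    intro u
    rw [Finset.disjoint_left]
    rintro x hx1 hx2
    rw [Finset.mem_filter] at hx1 hx2
    obtain ⟨_, hur, hpu, _⟩ := hx1
    obtain ⟨_, hxr, hpx, _⟩ := hx2
    by_cases he : u = x
    · subst he; exact par_ne hT hur hpu
    · exact no_mutual hT hur hxr hpu hpx
  have hod : ∀ u, ((univ : Finset V).filter fun x => decide (P1 u x ∨ P2 u x) = true).card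
      = od hT r S u := by
    intro u
    have hsplit : ((univ : Finset V).filter fun x => decide (P1 u x ∨ P2 u x) = true)
        = (univ.filter fun x => P1 u x) ∪ (univ.filter fun x => P2 u x) := by
      ext x
      simp only [Finset.mem_filter, Finset.mem_union, decide_eq_true_eq, Finset.mem_univ,
        true_and]
    rw [hsplit, Finset.card_union_of_disjoint (hdisj u)]
    unfold od
    congr 1
    · by_cases h : u ≠ r ∧ S u = true
      · rw [if_pos h]
        have : (univ.filter fun x => P1 u x) = {par hT r u} := by
          ext x
          simp only [Finset.mem_filter, Finset.mem_univ, true_and, Finset.mem_singleton,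
            hP1]
          constructor
          · rintro ⟨_, hp, _⟩; exact hp.symm
          · rintro rfl; exact ⟨h.1, rfl, h.2⟩
        rw [this, Finset.card_singleton]
      · rw [if_neg h]
        have : (univ.filter fun x => P1 u x) = ∅ := by
          ext x
          simp only [Finset.mem_filter, Finset.mem_univ, true_and, Finset.notMem_empty,
            iff_false, hP1]
          rintro ⟨h1, _, h3⟩
          exact h ⟨h1, h3⟩
        rw [this, Finset.card_empty]
    · congr 1
      ext x
      simp only [Finset.mem_filter, Finset.mem_univ, true_and, hP2, mem_childs hT]
      tauto
  refine ⟨⟨fun u x => decide (P1 u x ∨ P2 u x), ?_, ?_⟩, ?_, ?_⟩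
  · -- adj_iff
    intro u v
    simp only [decide_eq_true_eq]
    constructor
    · intro hadj
      rcases adj_cases hT hadj with ⟨hur, hpu⟩ | ⟨hvr, hpv⟩
      · by_cases hsu : S u = true
        · exact Or.inl (Or.inl ⟨hur, hpu, hsu⟩)
        · exact Or.inr (Or.inr ⟨hur, hpu, by simpa using hsu⟩)
      · by_cases hsv : S v = true
        · exact Or.inr (Or.inl ⟨hvr, hpv, hsv⟩)
        · exact Or.inl (Or.inr ⟨hvr, hpv, by simpa using hsv⟩)
    · rintro ((⟨hur, hpu, _⟩ | ⟨hvr, hpv, _⟩) | (⟨hvr, hpv, _⟩ | ⟨hur, hpu, _⟩))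
      · exact hpu ▸ adj_par hT hur
      · exact (hpv ▸ adj_par hT hvr).symm
      · exact (hpv ▸ adj_par hT hvr).symm
      · exact hpu ▸ adj_par hT hur
  · -- not_both
    intro u v
    simp only [decide_eq_true_eq]
    rintro ⟨h1 | h1, h2 | h2⟩
    · exact hexcl2 u v h1 h2
    · rcases h1 with ⟨_, _, hs⟩; rcases h2 with ⟨_, _, hs'⟩
      rw [hs] at hs'; exact absurd hs' (by simp)
    · rcases h1 with ⟨_, _, hs⟩; rcases h2 with ⟨_, _, hs'⟩
      rw [hs'] at hs; exact absurd hs (by simp)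
    · exact hexcl3 v u h2 h1
  · -- proper
    intro u v hadj
    simp only [GOrientation.outDeg]
    rw [hod u, hod v]
    rcases adj_cases hT hadj with ⟨hur, hpu⟩ | ⟨hvr, hpv⟩
    · have := (hS u).2 hur
      rwa [hpu] at this
    · have := (hS v).2 hvr
      rw [hpv] at this
      exact this.symm
  · -- bound
    intro u
    simp only [GOrientation.outDeg]
    rw [hod u]
    exact (hS u).1

theorem stmt11 {V : Type*} [Fintype V] (T : SimpleGraph V) (hT : T.IsTree) :
    ∃ o : GOrientation T, o.IsProper ∧ ∀ u, o.outDeg u ≤ 4 :=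
  tree_proper_orientation T hT
end

section
/- Let G be a finite graph and let p be a fractional orientation of its edges, assigning to each edge uv values p(u,v), p(v,u) ∈ [0,1] with p(u,v) + p(v,u) = 1. Then there exists a genuine orientation q of G such that for every vertex u, the outdegree of u under q is either ⌊Σ_{v∈N(u)} p(u,v)⌋ or ⌈Σ_{v∈N(u)} p(u,v)⌉, and likewise the indegree of u under q is either ⌊Σ_{v∈N(u)} p(v,u)⌋ or ⌈Σ_{v∈N(u)} p(v,u)⌉. -/
open SimpleGraph Finset

namespace Stmt16Aux
variable {V : Type*} [Fintype V] {G : SimpleGraph V} [DecidableRel G.Adj]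

def GoodP (G : SimpleGraph V) (p : V → V → ℝ) : Prop :=
  ∀ u v, G.Adj u v → 0 ≤ p u v ∧ p u v + p v u = 1

noncomputable def sOut (G : SimpleGraph V) [DecidableRel G.Adj] (p : V → V → ℝ) (u : V) : ℝ :=
  ∑ v ∈ G.neighborFinset u, p u v

open Classical in
noncomputable def fCount (G : SimpleGraph V) (p : V → V → ℝ) : ℕ :=
  ((univ ×ˢ univ).filter fun q : V × V => G.Adj q.1 q.2 ∧ p q.1 q.2 ≠ 0 ∧ p q.1 q.2 ≠ 1).card

@[reducible]
def fracG (G : SimpleGraph V) (p : V → V → ℝ) : SimpleGraph V where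
  Adj u v := G.Adj u v ∧ (p u v ≠ 0 ∧ p u v ≠ 1) ∧ (p v u ≠ 0 ∧ p v u ≠ 1)
  symm := ⟨fun u v ⟨h, h1, h2⟩ => ⟨h.symm, h2, h1⟩⟩
  loopless := ⟨fun u ⟨h, _⟩ => G.loopless.irrefl u h⟩

omit [Fintype V] [DecidableRel G.Adj] in
lemma GoodP.le_one {p : V → V → ℝ} (hp : GoodP G p) {u v : V} (h : G.Adj u v) : p u v ≤ 1 := by
  have h1 := hp u v h
  have h2 := (hp v u h.symm).1
  linarith [h1.2]

omit [Fintype V] [DecidableRel G.Adj] in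
lemma fracG_adj_of {p : V → V → ℝ} (hp : GoodP G p) {u v : V} (h : G.Adj u v)
    (h0 : p u v ≠ 0) (h1 : p u v ≠ 1) : (fracG G p).Adj u v := by
  refine ⟨h, ⟨h0, h1⟩, ?_, ?_⟩ <;>
  · have := (hp u v h).2
    intro hc
    rw [hc] at this
    first
      | exact h1 (by linarith)
      | exact h0 (by linarith)

omit [Fintype V] [DecidableRel G.Adj] in
lemma fracG_lt {p : V → V → ℝ} (hp : GoodP G p) {u v : V} (h : (fracG G p).Adj u v) :
    G.Adj u v ∧ 0 < p u v ∧ p u v < 1 := by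
  obtain ⟨hadj, ⟨h0, h1⟩, -⟩ := h
  exact ⟨hadj, lt_of_le_of_ne (hp u v hadj).1 (Ne.symm h0), lt_of_le_of_ne (hp.le_one hadj) h1⟩

omit [Fintype V] in
lemma dart_count {F : SimpleGraph V} [DecidableEq V] {a b : V} (W : F.Walk a b) (u : V) :
    (W.darts.filter fun d => d.fst = u).length + (if u = b then 1 else 0)
      = (W.darts.filter fun d => d.snd = u).length + (if u = a then 1 else 0) := by
  induction W with
  | nil => simp
  | @cons x y z h W ih =>
    simp only [Walk.darts_cons, List.filter_cons]
    by_cases hx : x = u <;> by_cases hy : y = u <;>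
      simp_all [eq_comm] <;> omega

lemma sum_ite_fst [DecidableEq V] {ε : ℝ} {L : List (V × V)} (hnd : L.Nodup)
    (hL : ∀ q ∈ L, G.Adj q.1 q.2) (u : V) :
    ∑ v ∈ G.neighborFinset u, (if (u, v) ∈ L then ε else 0)
      = (L.filter fun q => q.1 = u).length * ε := by
  rw [Finset.sum_ite, Finset.sum_const, Finset.sum_const_zero, add_zero, nsmul_eq_mul]
  congr 1
  rw [← List.toFinset_card_of_nodup (hnd.filter _)]
  norm_cast
  apply Finset.card_bij (fun v _ => (u, v))
  · intro v hv
    simp only [Finset.mem_filter] at hv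
    simp [List.mem_filter, hv.2]
  · intro v1 h1 v2 h2 h
    simpa using h
  · intro q hq
    simp only [List.mem_toFinset, List.mem_filter, decide_eq_true_eq] at hq
    refine ⟨q.2, ?_, ?_⟩
    · simp only [Finset.mem_filter, mem_neighborFinset]
      have := hL q hq.1
      rw [hq.2] at this
      refine ⟨this, ?_⟩
      have : (u, q.2) = q := by ext <;> simp [hq.2.symm]
      rw [this]; exact hq.1
    · ext <;> simp [hq.2.symm]

lemma sum_ite_snd [DecidableEq V] {ε : ℝ} {L : List (V × V)} (hnd : L.Nodup)
    (hL : ∀ q ∈ L, G.Adj q.1 q.2) (u : V) :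
    ∑ v ∈ G.neighborFinset u, (if (v, u) ∈ L then ε else 0)
      = (L.filter fun q => q.2 = u).length * ε := by
  rw [Finset.sum_ite, Finset.sum_const, Finset.sum_const_zero, add_zero, nsmul_eq_mul]
  congr 1
  rw [← List.toFinset_card_of_nodup (hnd.filter _)]
  norm_cast
  apply Finset.card_bij (fun v _ => (v, u))
  · intro v hv
    simp only [Finset.mem_filter] at hv
    simp [List.mem_filter, hv.2]
  · intro v1 h1 v2 h2 h
    simpa using h
  · intro q hq
    simp only [List.mem_toFinset, List.mem_filter, decide_eq_true_eq] at hq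
    refine ⟨q.1, ?_, ?_⟩
    · simp only [Finset.mem_filter, mem_neighborFinset]
      have := (hL q hq.1).symm
      rw [hq.2] at this
      refine ⟨this, ?_⟩
      have : (q.1, u) = q := by ext <;> simp [hq.2.symm]
      rw [this]; exact hq.1
    · ext <;> simp [hq.2.symm]

omit [Fintype V] in
lemma first_dart {F : SimpleGraph V} {a b : V} (W : F.Walk a b) (h : ¬ W.Nil) :
    ∃ d ∈ W.darts, d.fst = a ∧ d.snd = W.getVert 1 := by
  cases W with
  | nil => simp at h
  | cons hadj W =>
    exact ⟨⟨(_, _), hadj⟩, by simp [Walk.darts_cons], rfl, by simp [Walk.getVert_cons]⟩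

lemma endpoint_ceil {p : V → V → ℝ} (hp : GoodP G p) {a v₁ : V}
    (hadj : (fracG G p).Adj a v₁)
    (huniq : ∀ w, (fracG G p).Adj a w → w = v₁) :
    sOut G p a + (1 - p a v₁) ≤ (⌈sOut G p a⌉ : ℝ) := by
  classical
  obtain ⟨hGa, hp0, hp1⟩ := fracG_lt hp hadj
  have hmem : v₁ ∈ G.neighborFinset a := (mem_neighborFinset G a v₁).mpr hGa
  set m : ℕ := (((G.neighborFinset a).erase v₁).filter fun v => p a v = 1).card with hm
  have hsum : sOut G p a = p a v₁ + m := by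
    rw [sOut, ← Finset.add_sum_erase _ _ hmem]
    congr 1
    have hc : ∀ v ∈ (G.neighborFinset a).erase v₁, p a v = if p a v = 1 then (1:ℝ) else 0 := by
      intro v hv
      obtain ⟨hne, hvN⟩ := Finset.mem_erase.mp hv
      have hGv : G.Adj a v := (mem_neighborFinset G a v).mp hvN
      by_cases h1 : p a v = 1
      · simp [h1]
      · by_cases h0 : p a v = 0
        · simp [h0, h1]
        · exact absurd (huniq v (fracG_adj_of hp hGv h0 h1)) hne
    rw [Finset.sum_congr rfl hc, Finset.sum_boole, hm]
  have hceil : (m : ℤ) + 1 ≤ ⌈sOut G p a⌉ := by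
    have : (m : ℝ) < sOut G p a := by rw [hsum]; linarith
    exact Int.lt_ceil.mpr (by exact_mod_cast this)
  have : ((m : ℤ) : ℝ) + 1 ≤ (⌈sOut G p a⌉ : ℝ) := by exact_mod_cast hceil
  push_cast at this ⊢
  linarith [hsum]

lemma endpoint_floor {p : V → V → ℝ} (hp : GoodP G p) {b v₁ : V}
    (hadj : (fracG G p).Adj b v₁)
    (huniq : ∀ w, (fracG G p).Adj b w → w = v₁) :
    (⌊sOut G p b⌋ : ℝ) ≤ sOut G p b - p b v₁ := by
  classical
  obtain ⟨hGa, hp0, hp1⟩ := fracG_lt hp hadj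
  have hmem : v₁ ∈ G.neighborFinset b := (mem_neighborFinset G b v₁).mpr hGa
  set m : ℕ := (((G.neighborFinset b).erase v₁).filter fun v => p b v = 1).card with hm
  have hsum : sOut G p b = p b v₁ + m := by
    rw [sOut, ← Finset.add_sum_erase _ _ hmem]
    congr 1
    have hc : ∀ v ∈ (G.neighborFinset b).erase v₁, p b v = if p b v = 1 then (1:ℝ) else 0 := by
      intro v hv
      obtain ⟨hne, hvN⟩ := Finset.mem_erase.mp hv
      have hGv : G.Adj b v := (mem_neighborFinset G b v).mp hvN
      by_cases h1 : p b v = 1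
      · simp [h1]
      · by_cases h0 : p b v = 0
        · simp [h0, h1]
        · exact absurd (huniq v (fracG_adj_of hp hGv h0 h1)) hne
    rw [Finset.sum_congr rfl hc, Finset.sum_boole, hm]
  have hfl : ⌊sOut G p b⌋ ≤ (m : ℤ) := by
    have : sOut G p b < (m : ℝ) + 1 := by rw [hsum]; linarith
    have := Int.floor_lt.mpr (by exact_mod_cast this : sOut G p b < ((m + 1 : ℤ) : ℝ))
    omega
  have : (⌊sOut G p b⌋ : ℝ) ≤ ((m : ℤ) : ℝ) := by exact_mod_cast hfl
  push_cast at this ⊢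
  linarith [hsum]

end Stmt16Aux

namespace Stmt16Aux
variable {V : Type*} [Fintype V] {G : SimpleGraph V} [DecidableRel G.Adj]

lemma push {p : V → V → ℝ} (hp : GoodP G p)
    {a b : V} (W : (fracG G p).Walk a b) (hT : W.edges.Nodup) (hnil : ¬ W.Nil)
    (hends : a = b ∨
      ((∃ d ∈ W.darts, d.fst = a ∧ ∀ w, (fracG G p).Adj a w → w = d.snd) ∧
       (∃ d ∈ W.darts, d.snd = b ∧ ∀ w, (fracG G p).Adj b w → w = d.fst))) :
    ∃ p', GoodP G p' ∧ fCount G p' < fCount G p ∧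
      ∀ u, ((⌊sOut G p u⌋ : ℝ) ≤ sOut G p' u ∧ sOut G p' u ≤ (⌈sOut G p u⌉ : ℝ)) := by
  classical
  have hTd : (W.darts.map SimpleGraph.Dart.edge).Nodup := hT
  have hDnd : W.darts.Nodup := hTd.of_map _
  set L := W.darts.map SimpleGraph.Dart.toProd with hLdef
  have hLnd : L.Nodup := hDnd.map SimpleGraph.Dart.toProd_injective
  have hmemL : ∀ {x y : V}, (x, y) ∈ L → (fracG G p).Adj x y := by
    intro x y hxy
    rw [hLdef, List.mem_map] at hxy
    obtain ⟨d, hd, hdp⟩ := hxy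
    have := d.adj
    rw [show d.fst = x from congrArg Prod.fst hdp, show d.snd = y from congrArg Prod.snd hdp] at this
    exact this
  have hrev : ∀ {x y : V}, (x, y) ∈ L → (y, x) ∉ L := by
    intro x y hxy hyx
    have hFxy := hmemL hxy
    rw [hLdef, List.mem_map] at hxy hyx
    obtain ⟨d, hd, hdp⟩ := hxy
    obtain ⟨e, he, hep⟩ := hyx
    have hedge : d.edge = e.edge := by
      rw [SimpleGraph.Dart.edge, SimpleGraph.Dart.edge, hdp, hep, Sym2.eq_swap]
    have hde : d = e := List.inj_on_of_nodup_map hTd hd he hedge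
    rw [hde, hep] at hdp
    have hxey : x = y := ((Prod.ext_iff).mp hdp.symm).1
    exact hFxy.ne hxey
  have hdne : W.darts ≠ [] := by
    intro h
    apply hnil
    rw [Walk.nil_iff_length_eq, ← Walk.length_darts, h]
    rfl
  have htne : W.darts.toFinset.Nonempty := by
    rcases List.exists_mem_of_ne_nil _ hdne with ⟨d, hd⟩
    exact ⟨d, List.mem_toFinset.mpr hd⟩
  obtain ⟨d0, hd0, hd0min⟩ := W.darts.toFinset.exists_min_image (fun d => 1 - p d.fst d.snd) htne
  rw [List.mem_toFinset] at hd0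
  set ε := 1 - p d0.fst d0.snd with hεdef
  have hd0L : (d0.fst, d0.snd) ∈ L := by
    rw [hLdef, List.mem_map]; exact ⟨d0, hd0, rfl⟩
  have hεle : ∀ {x y : V}, (x, y) ∈ L → ε ≤ 1 - p x y := by
    intro x y hxy
    rw [hLdef, List.mem_map] at hxy
    obtain ⟨d, hd, hdp⟩ := hxy
    have hle := hd0min d (List.mem_toFinset.mpr hd)
    rw [show d.fst = x from congrArg Prod.fst hdp,
      show d.snd = y from congrArg Prod.snd hdp] at hle
    exact hle
  have hεpos : 0 < ε := by
    have := (fracG_lt hp (hmemL hd0L)).2.2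
    linarith
  have hGL : ∀ q ∈ L, G.Adj q.1 q.2 := by
    intro q hq
    have hq' : (q.1, q.2) ∈ L := by simpa using hq
    exact (fracG_lt hp (hmemL hq')).1
  refine ⟨fun x y => p x y + (if (x, y) ∈ L then ε else 0) - (if (y, x) ∈ L then ε else 0),
    ?_, ?_, ?_⟩
  · -- GoodP
    intro u v huv
    have hsum := (hp u v huv).2
    have hnn := (hp u v huv).1
    constructor
    · by_cases h1 : (u, v) ∈ L
      · simp only [if_pos h1, if_neg (hrev h1)]
        linarith
      · by_cases h2 : (v, u) ∈ L
        · have hle := hεle h2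
          simp only [if_neg h1, if_pos h2]
          linarith
        · simp only [if_neg h1, if_neg h2]
          linarith
    · by_cases h1 : (u, v) ∈ L <;> by_cases h2 : (v, u) ∈ L <;>
        first
          | exact absurd h1 (hrev h2)
          | exact absurd h2 (hrev h1)
          | (simp only [if_pos, if_neg, h1, h2, if_true, if_false]; linarith)
  · -- fCount decreases
    refine Finset.card_lt_card ((Finset.ssubset_iff_of_subset ?_).mpr ?_)
    · intro q hq
      simp only [Finset.mem_filter, Finset.mem_product, Finset.mem_univ, and_self, true_and] at hq ⊢
      obtain ⟨hadj, h0, h1⟩ := hq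
      refine ⟨hadj, ?_, ?_⟩
      · by_cases hL1 : (q.1, q.2) ∈ L
        · exact (hmemL hL1).2.1.1
        · by_cases hL2 : (q.2, q.1) ∈ L
          · exact (hmemL hL2).2.2.1
          · simp only [if_neg hL1, if_neg hL2] at h0
            intro hc; apply h0; rw [hc]; ring
      · by_cases hL1 : (q.1, q.2) ∈ L
        · exact (hmemL hL1).2.1.2
        · by_cases hL2 : (q.2, q.1) ∈ L
          · exact (hmemL hL2).2.2.2
          · simp only [if_neg hL1, if_neg hL2] at h1
            intro hc; apply h1; rw [hc]; ring
    · refine ⟨(d0.fst, d0.snd), ?_, ?_⟩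
      · simp only [Finset.mem_filter, Finset.mem_product, Finset.mem_univ, and_self, true_and]
        have := fracG_lt hp (hmemL hd0L)
        obtain ⟨hG0, hlt0, hlt1⟩ := this
        exact ⟨hG0, ne_of_gt hlt0, ne_of_lt hlt1⟩
      · simp only [Finset.mem_filter, Finset.mem_product, Finset.mem_univ, and_self, true_and,
          not_and, ne_eq, not_not]
        intro _ _
        simp only [if_pos hd0L, if_neg (hrev hd0L)]
        rw [hεdef]; ring
  · -- sum bounds
    intro u
    have hkey : sOut G (fun x y => p x y + (if (x, y) ∈ L then ε else 0)
          - (if (y, x) ∈ L then ε else 0)) u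
        = sOut G p u + ((L.filter fun q => q.1 = u).length : ℝ) * ε
            - ((L.filter fun q => q.2 = u).length : ℝ) * ε := by
      unfold sOut
      rw [Finset.sum_sub_distrib, Finset.sum_add_distrib,
        sum_ite_fst hLnd hGL u, sum_ite_snd hLnd hGL u]
    have hfst : (L.filter fun q => q.1 = u).length
        = (W.darts.filter fun d => d.fst = u).length := by
      rw [hLdef, List.filter_map, List.length_map]
      rfl
    have hsnd : (L.filter fun q => q.2 = u).length
        = (W.darts.filter fun d => d.snd = u).length := by
      rw [hLdef, List.filter_map, List.length_map]
      rfl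
    have hcnt := dart_count W u
    set A := (W.darts.filter fun d => d.fst = u).length with hA
    set B := (W.darts.filter fun d => d.snd = u).length with hB
    rw [hkey, hfst, hsnd]
    have hfloor := Int.floor_le (sOut G p u)
    have hceil := Int.le_ceil (sOut G p u)
    rcases hends with hab | ⟨⟨da, hdaW, hdafst, hauniq⟩, db, hdbW, hdbsnd, hbuniq⟩
    · have hAB : A = B := by
        subst hab
        by_cases h : u = a <;> simp [h] at hcnt <;> omega
      rw [hAB]
      constructor <;> linarith
    · by_cases hua : u = a
      · by_cases hub : u = b
        · have hAB : A = B := by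
            split_ifs at hcnt <;> first | omega | contradiction
          rw [hAB]
          constructor <;> linarith
        · have hAB : A = B + 1 := by
            split_ifs at hcnt <;> first | omega | contradiction
          have hadjA : (fracG G p).Adj a da.snd := by rw [← hdafst]; exact da.adj
          have hε2 : ε ≤ 1 - p a da.snd := by
            have hmem : (da.fst, da.snd) ∈ L := by
              rw [hLdef, List.mem_map]; exact ⟨da, hdaW, rfl⟩
            have := hεle hmem
            rw [hdafst] at this
            exact this
          have hup := endpoint_ceil hp hadjA hauniq
          subst hua
          rw [hAB]
          push_cast
          constructor
          · linarith
          · linarith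
      · by_cases hub : u = b
        · have hAB : B = A + 1 := by
            split_ifs at hcnt <;> first | omega | contradiction
          have hadjB : (fracG G p).Adj b db.fst := by rw [← hdbsnd]; exact db.adj.symm
          have hε2 : ε ≤ p b db.fst := by
            have hmem : (db.fst, db.snd) ∈ L := by
              rw [hLdef, List.mem_map]; exact ⟨db, hdbW, rfl⟩
            have h1 := hεle hmem
            rw [hdbsnd] at h1
            have hGdb : G.Adj db.fst b := by
              have := (fracG_lt hp (by rw [← hdbsnd]; exact db.adj : (fracG G p).Adj db.fst b)).1
              exact this
            have h2 := (hp db.fst b hGdb).2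
            linarith
          have hlow := endpoint_floor hp hadjB hbuniq
          subst hub
          rw [hAB]
          push_cast
          constructor
          · linarith
          · linarith
        · have hAB : A = B := by
            split_ifs at hcnt <;> first | omega | contradiction
          rw [hAB]
          constructor <;> linarith
end Stmt16Aux

namespace Stmt16Aux
variable {V : Type*} [Fintype V] {G : SimpleGraph V} [DecidableRel G.Adj]

open Classical in
lemma exists_frac_of_fCount_pos {p : V → V → ℝ} (h : 0 < fCount G p) :
    ∃ u v, G.Adj u v ∧ p u v ≠ 0 ∧ p u v ≠ 1 := by
  obtain ⟨q, hq⟩ := Finset.card_pos.mp h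
  simp only [Finset.mem_filter] at hq
  exact ⟨q.1, q.2, hq.2⟩

lemma descent {p : V → V → ℝ} (hp : GoodP G p) (h : 0 < fCount G p) :
    ∃ p', GoodP G p' ∧ fCount G p' < fCount G p ∧
      ∀ u, ((⌊sOut G p u⌋ : ℝ) ≤ sOut G p' u ∧ sOut G p' u ≤ (⌈sOut G p u⌉ : ℝ)) := by
  obtain ⟨u0, v0, hadj, h0, h1⟩ := exists_frac_of_fCount_pos h
  classical
  have hFxy : (fracG G p).Adj u0 v0 := fracG_adj_of hp hadj h0 h1
  by_cases hac : (fracG G p).IsAcyclic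
  · -- longest path
    set P : ℕ → Prop := fun n => ∃ (x y : V) (Q : (fracG G p).Walk x y), Q.IsPath ∧ Q.length = n
      with hPdef
    have hP1 : P 1 := ⟨u0, v0, Walk.cons hFxy Walk.nil, (Path.singleton hFxy).2, rfl⟩
    have hbound : ∀ m, P m → m ≤ Fintype.card V := by
      rintro m ⟨x, y, Q, hQ, hl⟩
      exact hl ▸ Nat.le_of_lt hQ.length_lt
    set n := Nat.findGreatest P (Fintype.card V) with hn
    have hPn : P n := Nat.findGreatest_spec (hbound 1 hP1) hP1
    have hmax : ∀ m, P m → m ≤ n := fun m hm => Nat.le_findGreatest (hbound m hm) hm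
    have hn1 : 1 ≤ n := hmax 1 hP1
    have hclaim : ∀ (x y : V) (Q : (fracG G p).Walk x y), Q.IsPath → Q.length = n →
        ∀ w, (fracG G p).Adj x w → w = Q.getVert 1 := by
      intro x y Q hQ hQl w hw
      by_cases hmem : w ∈ Q.support
      · have hto : Q.takeUntil w hmem = Walk.cons hw Walk.nil := by
          have h2 : (Walk.cons hw Walk.nil : (fracG G p).Walk x w).IsPath := (Path.singleton hw).2
          have h3 := isAcyclic_iff_path_unique.mp hac
            ⟨Q.takeUntil w hmem, hQ.takeUntil hmem⟩ ⟨Walk.cons hw Walk.nil, h2⟩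
          exact congrArg Subtype.val h3
        have hspec := Q.take_spec hmem
        rw [hto] at hspec
        conv_rhs => rw [← hspec]
        simp [Walk.cons_append, Walk.getVert_cons_succ, Walk.nil_append, Walk.getVert_zero]
      · exfalso
        have hP' : P (n + 1) :=
          ⟨w, y, Walk.cons hw.symm Q, hQ.cons hmem, by simp [hQl]⟩
        have := hmax _ hP'
        omega
    obtain ⟨x, y, Q, hQ, hQl⟩ := hPn
    have hnnil : ¬ Q.Nil := by rw [Walk.nil_iff_length_eq]; omega
    obtain ⟨d1, hd1W, hd1fst, hd1snd⟩ := first_dart Q hnnil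
    have hAend : ∀ w, (fracG G p).Adj x w → w = d1.snd := by
      intro w hw; rw [hd1snd]; exact hclaim x y Q hQ hQl w hw
    have hQr : Q.reverse.IsPath := hQ.reverse
    have hQrl : Q.reverse.length = n := by simp [hQl]
    have hrnil : ¬ Q.reverse.Nil := by rw [Walk.nil_iff_length_eq]; simp [hQl]; omega
    obtain ⟨d2, hd2W, hd2fst, hd2snd⟩ := first_dart Q.reverse hrnil
    have hBend : ∀ w, (fracG G p).Adj y w → w = d2.snd := by
      intro w hw; rw [hd2snd]; exact hclaim y x Q.reverse hQr hQrl w hw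
    rw [Walk.darts_reverse, List.mem_reverse, List.mem_map] at hd2W
    obtain ⟨e, heW, hed⟩ := hd2W
    have hefst : e.snd = d2.fst := by rw [← hed]; rfl
    have hesnd : e.fst = d2.snd := by rw [← hed]; rfl
    refine push hp Q hQ.isTrail.edges_nodup hnnil (Or.inr ⟨⟨d1, hd1W, hd1fst, hAend⟩,
      ⟨e, heW, by rw [hefst, hd2fst], fun w hw => by rw [hesnd]; exact hBend w hw⟩⟩)
  · simp only [SimpleGraph.IsAcyclic, not_forall, not_not] at hac
    obtain ⟨v, c, hc⟩ := hac
    have hnnil : ¬ c.Nil := by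
      rw [Walk.nil_iff_length_eq]
      have := hc.three_le_length
      omega
    exact push hp c hc.isCircuit.isTrail.edges_nodup hnnil (Or.inl rfl)

end Stmt16Aux

namespace Stmt16Aux
variable {V : Type*} [Fintype V] {G : SimpleGraph V} [DecidableRel G.Adj]

open Classical in
lemma fCount_eq_zero_imp {p : V → V → ℝ} (h : fCount G p = 0) :
    ∀ u v, G.Adj u v → p u v = 0 ∨ p u v = 1 := by
  intro u v huv
  by_contra hc
  push_neg at hc
  have hpos : 0 < fCount G p := by
    apply Finset.card_pos.mpr
    refine ⟨(u, v), ?_⟩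
    simp only [Finset.mem_filter, Finset.mem_product, Finset.mem_univ, and_self, true_and]
    exact ⟨huv, hc.1, hc.2⟩
  omega

lemma reduce : ∀ (n : ℕ) (p : V → V → ℝ), fCount G p ≤ n → GoodP G p →
    ∃ p', GoodP G p' ∧ fCount G p' = 0 ∧
      ∀ u, ((⌊sOut G p u⌋ : ℝ) ≤ sOut G p' u ∧ sOut G p' u ≤ (⌈sOut G p u⌉ : ℝ)) := by
  intro n
  induction n with
  | zero =>
    intro p hle hp
    exact ⟨p, hp, Nat.le_zero.mp hle, fun u => ⟨Int.floor_le _, Int.le_ceil _⟩⟩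
  | succ n ih =>
    intro p hle hp
    by_cases h0 : fCount G p = 0
    · exact ⟨p, hp, h0, fun u => ⟨Int.floor_le _, Int.le_ceil _⟩⟩
    · obtain ⟨p'', hp'', hlt, hbd⟩ := descent hp (Nat.pos_of_ne_zero h0)
      obtain ⟨p', hp', hz, hbd'⟩ := ih p'' (by omega) hp''
      refine ⟨p', hp', hz, fun u => ?_⟩
      obtain ⟨hl1, hu1⟩ := hbd u
      obtain ⟨hl2, hu2⟩ := hbd' u
      constructor
      · have hff : ⌊sOut G p u⌋ ≤ ⌊sOut G p'' u⌋ := Int.le_floor.mpr hl1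
        calc ((⌊sOut G p u⌋ : ℝ)) ≤ (⌊sOut G p'' u⌋ : ℝ) := by exact_mod_cast hff
          _ ≤ sOut G p' u := hl2
      · have hcc : ⌈sOut G p'' u⌉ ≤ ⌈sOut G p u⌉ := Int.ceil_le.mpr hu1
        calc sOut G p' u ≤ (⌈sOut G p'' u⌉ : ℝ) := hu2
          _ ≤ (⌈sOut G p u⌉ : ℝ) := by exact_mod_cast hcc

end Stmt16Aux

open Stmt16Aux in
theorem stmt16 {V : Type*} [Fintype V] (G : SimpleGraph V) [DecidableRel G.Adj]
    (p : V → V → ℝ)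
    (hp : ∀ u v, G.Adj u v → 0 ≤ p u v ∧ p u v + p v u = 1) :
    ∃ o : GOrientation G, ∀ u,
      (o.outDeg u = ⌊∑ v ∈ G.neighborFinset u, p u v⌋₊ ∨
        o.outDeg u = ⌈∑ v ∈ G.neighborFinset u, p u v⌉₊) ∧
      (o.inDeg u = ⌊∑ v ∈ G.neighborFinset u, p v u⌋₊ ∨
        o.inDeg u = ⌈∑ v ∈ G.neighborFinset u, p v u⌉₊) := by
  classical
  have hgood : GoodP G p := hp
  obtain ⟨p', hp', hz, hbd⟩ := reduce (fCount G p) p le_rfl hgood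
  have hint : ∀ u v, G.Adj u v → p' u v = 0 ∨ p' u v = 1 := fCount_eq_zero_imp hz
  set dir : V → V → Bool := fun u v => decide (G.Adj u v ∧ p' u v = 1) with hdirdef
  have hdir : ∀ u v, dir u v = true ↔ (G.Adj u v ∧ p' u v = 1) := by
    intro u v; rw [hdirdef]; exact decide_eq_true_iff
  have hadj_iff : ∀ u v, G.Adj u v ↔ (dir u v = true ∨ dir v u = true) := by
    intro u v
    constructor
    · intro h
      rcases hint u v h with h0 | h1
      · right
        rw [hdir]
        have hs := (hp' u v h).2
        exact ⟨h.symm, by linarith⟩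
      · left
        rw [hdir]
        exact ⟨h, h1⟩
    · rintro (h | h) <;> rw [hdir] at h
      · exact h.1
      · exact h.1.symm
  have hnb : ∀ u v, ¬(dir u v = true ∧ dir v u = true) := by
    rintro u v ⟨h1, h2⟩
    rw [hdir] at h1 h2
    have := (hp' u v h1.1).2
    rw [h1.2, h2.2] at this
    norm_num at this
  refine ⟨⟨dir, hadj_iff, hnb⟩, fun u => ?_⟩
  set s : ℝ := ∑ v ∈ G.neighborFinset u, p u v with hs
  set t : ℝ := ∑ v ∈ G.neighborFinset u, p v u with ht
  set d : ℕ := G.degree u with hd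
  set k : ℕ := (GOrientation.mk dir hadj_iff hnb).outDeg u with hk
  set j : ℕ := (GOrientation.mk dir hadj_iff hnb).inDeg u with hj
  -- outdegree equals integral sum
  have hkcard : k = ((G.neighborFinset u).filter fun v => p' u v = 1).card := by
    rw [hk]
    unfold GOrientation.outDeg
    congr 1
    ext v
    simp only [Finset.mem_filter, Finset.mem_univ, true_and, mem_neighborFinset, hdir]
  have hsum' : sOut G p' u = (((G.neighborFinset u).filter fun v => p' u v = 1).card : ℝ) := by
    rw [sOut]
    have hterm : ∀ v ∈ G.neighborFinset u, p' u v = if p' u v = 1 then (1:ℝ) else 0 := by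
      intro v hv
      rcases hint u v ((mem_neighborFinset G u v).mp hv) with h0 | h1
      · simp [h0]
      · simp [h1]
    rw [Finset.sum_congr rfl hterm, Finset.sum_boole]
  have hko : (k : ℝ) = sOut G p' u := by rw [hsum', hkcard]
  -- bounds
  obtain ⟨hl, hu⟩ := hbd u
  have hseq : sOut G p u = s := rfl
  rw [hseq] at hl hu
  have hkl : ⌊s⌋ ≤ (k : ℤ) := by
    have : (⌊s⌋ : ℝ) ≤ (k : ℝ) := by rw [hko]; exact hl
    exact_mod_cast this
  have hku : (k : ℤ) ≤ ⌈s⌉ := by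
    have : (k : ℝ) ≤ (⌈s⌉ : ℝ) := by rw [hko]; exact hu
    exact_mod_cast this
  have hcf : ⌈s⌉ ≤ ⌊s⌋ + 1 := Int.ceil_le_floor_add_one s
  have hfc : ⌊s⌋ ≤ ⌈s⌉ := Int.floor_le_ceil s
  have hs0 : 0 ≤ s := by
    rw [hs]
    exact Finset.sum_nonneg fun v hv => (hp u v ((mem_neighborFinset G u v).mp hv)).1
  have hf0 : 0 ≤ ⌊s⌋ := Int.floor_nonneg.mpr hs0
  have hdcard : d = (G.neighborFinset u).card := rfl
  have hsd : s ≤ (d : ℝ) := by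
    rw [hs, hdcard]
    calc ∑ v ∈ G.neighborFinset u, p u v ≤ ∑ v ∈ G.neighborFinset u, (1:ℝ) :=
          Finset.sum_le_sum fun v hv => hgood.le_one ((mem_neighborFinset G u v).mp hv)
      _ = ((G.neighborFinset u).card : ℝ) := by simp
  have hcd : ⌈s⌉ ≤ (d : ℤ) := by
    apply Int.ceil_le.mpr
    exact_mod_cast hsd
  have hflt : ⌊s⌋.toNat = ⌊s⌋₊ := Int.floor_toNat s
  have hclt : ⌈s⌉.toNat = ⌈s⌉₊ := Int.ceil_toNat s
  have hout : k = ⌊s⌋₊ ∨ k = ⌈s⌉₊ := by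
    rw [← hflt, ← hclt]
    omega
  -- indegree
  have hjcard : j = ((G.neighborFinset u).filter fun v => ¬ p' u v = 1).card := by
    rw [hj]
    unfold GOrientation.inDeg
    have hset : (Finset.univ.filter fun v => dir v u = true)
        = ((G.neighborFinset u).filter fun v => ¬ p' u v = 1) := by
      ext v
      simp only [Finset.mem_filter, Finset.mem_univ, true_and, mem_neighborFinset, hdir]
      constructor
      · rintro ⟨hadj, hone⟩
        refine ⟨hadj.symm, ?_⟩
        have := (hp' v u hadj).2
        intro hc
        rw [hone] at this
        rw [hc] at this
        norm_num at this
      · rintro ⟨hadj, hnot⟩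
        refine ⟨hadj.symm, ?_⟩
        rcases hint u v hadj with h0 | h1
        · have := (hp' u v hadj).2
          rw [h0] at this
          linarith
        · exact absurd h1 hnot
    rw [hset]
  have hjk : j + k = d := by
    rw [hjcard, hkcard, hdcard]
    rw [add_comm]
    exact Finset.card_filter_add_card_filter_not _
  have hts : t = (d : ℝ) - s := by
    have hds : (d : ℝ) = ((G.neighborFinset u).card : ℝ) := by rw [hdcard]
    have : t + s = (d : ℝ) := by
      rw [ht, hs, ← Finset.sum_add_distrib, hds]
      have hterm : ∀ v ∈ G.neighborFinset u, p v u + p u v = 1 := by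
        intro v hv
        have := (hp u v ((mem_neighborFinset G u v).mp hv)).2
        linarith
      rw [Finset.sum_congr rfl hterm]
      simp
    linarith
  have htceil : ⌈t⌉ = (d : ℤ) - ⌊s⌋ := by
    rw [show t = -(s - ((d : ℤ) : ℝ)) by rw [hts]; push_cast; ring,
      Int.ceil_neg, Int.floor_sub_intCast]
    ring
  have htfloor : ⌊t⌋ = (d : ℤ) - ⌈s⌉ := by
    rw [show t = -(s - ((d : ℤ) : ℝ)) by rw [hts]; push_cast; ring,
      Int.floor_neg, Int.ceil_sub_intCast]
    ring
  have hin : j = ⌊t⌋₊ ∨ j = ⌈t⌉₊ := by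
    rw [← Int.floor_toNat t, ← Int.ceil_toNat t, htceil, htfloor]
    omega
  exact ⟨hout, hin⟩
end
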